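/- arXiv:math/0611582 — 8 statements merged into one kernel-verified Lean document; each statement's English description precedes it below -/
import Mathlib

section
/- Let n ≥ 3, 0 ≤ k ≤ n−2, and let d > 1 be a divisor of 2^(n−k) − 1. Set X := {2^n − 2^j : k ≤ j ≤ n}, m := (2^(n+1)+d) + (2^n − 2^k), Y := m − X, Z := {2^n + j·d : 1 ≤ j ≤ (2^n − 2^k)/d}, and A := X ∪ Y ∪ Z ∪ {2^n}. Then A is a normalised MSTD set with |A+A| = |A−A| + 1. -/
open Finset Pointwise

/-- A finite set of integers is normalised if its smallest element is `0` and
the gcd of its elements is `1`. -/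
def IsNormalised (A : Finset ℤ) : Prop :=
  0 ∈ A ∧ (∀ a ∈ A, 0 ≤ a) ∧ A.gcd id = 1

/-!
Write `t = (2^n - 2^k)/d` and `b = 2^n + (t+1)d`. Then `A` is `X`, the progression
`2^n + id` (`0 ≤ i ≤ t`) and `m - X = b + {2^j}`, and `B = A ∪ {b}` is symmetric under
`x ↦ m - x` (note `m = b + 2^n`), so `B + B = m + (B - B)` and `|B + B| = |B - B|`.
Every `b + a` and every `b - a` with `a ≠ 2^n` is already a sum, resp. difference, of
elements of `A`, so adding `b` to `A` creates the one new sum `2b` but the two new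
differences `±(b - 2^n)`. That these are new follows by comparing sizes, except in cases where
`d` would divide a power of two, which is impossible as `d > 1` divides `2^(n-k) - 1`.
-/

section InsertSymmetric

variable {α : Type*} [AddCommGroup α] [DecidableEq α] {A B : Finset α} {b c m : α}

theorem card_add_self_eq_card_sub_self_of_symmetric (h : ∀ x ∈ B, m - x ∈ B) :
    #(B + B) = #(B - B) := by
  have hB : B + B = (B - B).image (m + ·) := by
    ext w
    simp only [mem_add, mem_sub, mem_image]
    constructor
    · rintro ⟨p, hp, q, hq, rfl⟩
      exact ⟨p - (m - q), ⟨p, hp, m - q, h q hq, rfl⟩, by abel⟩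
    · rintro ⟨_, ⟨p, hp, q, hq, rfl⟩, rfl⟩
      exact ⟨p, hp, m - q, h q hq, by abel⟩
  rw [hB, card_image_of_injective _ (add_right_injective m)]

theorem insert_add_insert_self (h : ∀ a ∈ A, b + a ∈ A + A) :
    insert b A + insert b A = insert (b + b) (A + A) := by
  ext w
  simp only [mem_insert, mem_add]
  constructor
  · rintro ⟨p, rfl | hp, q, rfl | hq, rfl⟩
    · exact .inl rfl
    · exact .inr (mem_add.1 (h q hq))
    · exact .inr (mem_add.1 (add_comm q p ▸ h p hp))
    · exact .inr ⟨p, hp, q, hq, rfl⟩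
  · rintro (rfl | ⟨p, hp, q, hq, rfl⟩)
    · exact ⟨b, .inl rfl, b, .inl rfl, rfl⟩
    · exact ⟨p, .inr hp, q, .inr hq, rfl⟩

theorem neg_mem_sub_self {x : α} (h : x ∈ A - A) : -x ∈ A - A := by
  obtain ⟨p, hp, q, hq, rfl⟩ := mem_sub.1 h
  exact mem_sub.2 ⟨q, hq, p, hp, (neg_sub p q).symm⟩

theorem insert_sub_insert_self (hc : c ∈ A) (h : ∀ a ∈ A, a ≠ c → b - a ∈ A - A) :
    insert b A - insert b A = insert (b - c) (insert (c - b) (A - A)) := by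
  have h' : ∀ a ∈ A, a ≠ c → a - b ∈ A - A := fun a ha hac => by
    simpa using neg_mem_sub_self (h a ha hac)
  ext w
  simp only [mem_insert, mem_sub]
  constructor
  · rintro ⟨p, rfl | hp, q, rfl | hq, rfl⟩
    · exact .inr (.inr ⟨c, hc, c, hc, by simp⟩)
    · by_cases hqc : q = c
      · exact .inl (hqc ▸ rfl)
      · exact .inr (.inr (mem_sub.1 (h q hq hqc)))
    · by_cases hpc : p = c
      · exact .inr (.inl (hpc ▸ rfl))
      · exact .inr (.inr (mem_sub.1 (h' p hp hpc)))
    · exact .inr (.inr ⟨p, hp, q, hq, rfl⟩)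
  · rintro (rfl | rfl | ⟨p, hp, q, hq, rfl⟩)
    · exact ⟨b, .inl rfl, c, .inr hc, rfl⟩
    · exact ⟨c, .inr hc, b, .inl rfl, rfl⟩
    · exact ⟨p, .inr hp, q, .inr hq, rfl⟩

theorem card_add_eq_card_sub_add_one_of_insert_symmetric (hc : c ∈ A)
    (hsymm : ∀ x ∈ insert b A, b + c - x ∈ insert b A) (hsum : ∀ a ∈ A, b + a ∈ A + A)
    (hbb : b + b ∉ A + A) (hbc : b - c ∉ A - A) (hne : b - c ≠ c - b) :
    #(A + A) = #(A - A) + 1 := by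
  have hdiff : ∀ a ∈ A, a ≠ c → b - a ∈ A - A := fun a ha hac => by
    have hmem : b + c - a ∈ A := by
      rcases mem_insert.1 (hsymm a (mem_insert_of_mem ha)) with h | h
      · exact absurd (by simpa [add_sub_assoc, sub_eq_zero, eq_comm] using h) hac
      · exact h
    simpa [add_sub_right_comm] using sub_mem_sub hmem hc
  have hcb : c - b ∉ A - A := fun h => hbc (by simpa using neg_mem_sub_self h)
  have := card_add_self_eq_card_sub_self_of_symmetric hsymm
  rw [insert_add_insert_self hsum, insert_sub_insert_self hc hdiff, card_insert_of_notMem hbb,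
    card_insert_of_notMem (by simp [hne, hbc]), card_insert_of_notMem hcb] at this
  omega

end InsertSymmetric

theorem isCoprime_two_of_dvd_two_pow_sub_one {d : ℤ} {r : ℕ} (hr : r ≠ 0)
    (h : d ∣ 2 ^ r - 1) :
    IsCoprime 2 d := by
  obtain ⟨s, hs⟩ := h
  exact (IsCoprime.pow_left_iff (Nat.pos_of_ne_zero hr)).1 ⟨1, -s, by linear_combination hs⟩

theorem not_dvd_two_pow {d : ℤ} (hcop : IsCoprime 2 d) (hd : 1 < d) (j : ℕ) : ¬ d ∣ 2 ^ j :=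
  fun h => by
    have := Int.isUnit_iff.1 (hcop.pow_left.isUnit_of_dvd' h dvd_rfl)
    omega

theorem dvd_two_pow_sub_two_pow {d : ℤ} {n k : ℕ} (hkn : k ≤ n) (h : d ∣ 2 ^ (n - k) - 1) :
    d ∣ (2 : ℤ) ^ n - 2 ^ k := by
  rw [← Nat.sub_add_cancel hkn, pow_add, ← sub_one_mul]
  exact h.mul_right _

/-- The set `X ∪ (m - X) ∪ Z ∪ {2^n}` of the statement. -/
noncomputable def mstdSet (n k : ℕ) (d : ℤ) : Finset ℤ :=
  (Icc k n).image (fun j => (2 : ℤ) ^ n - 2 ^ j) ∪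
    ((Icc k n).image (fun j => (2 : ℤ) ^ n - 2 ^ j)).image
      (fun x => (2 ^ (n + 1) + d) + (2 ^ n - 2 ^ k) - x) ∪
    (Icc (1 : ℤ) ((2 ^ n - 2 ^ k) / d)).image (fun j => 2 ^ n + j * d) ∪ {2 ^ n}

noncomputable def mstdBlocks (n k : ℕ) (d t : ℤ) : Finset ℤ :=
  (Icc k n).image (fun j => (2 : ℤ) ^ n - 2 ^ j) ∪ (Icc 0 t).image (fun i => 2 ^ n + i * d) ∪
    (Icc k n).image (fun j => 2 ^ n + (t + 1) * d + 2 ^ j)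

section mstdBlocks

variable {n k : ℕ} {d t a : ℤ}

theorem mem_mstdBlocks :
    a ∈ mstdBlocks n k d t ↔ (∃ j ∈ Icc k n, 2 ^ n - 2 ^ j = a) ∨
      (∃ i ∈ Icc 0 t, 2 ^ n + i * d = a) ∨
        ∃ j ∈ Icc k n, 2 ^ n + (t + 1) * d + 2 ^ j = a := by
  simp only [mstdBlocks, mem_union, mem_image, or_assoc]

theorem mstdSet_eq_mstdBlocks (hd : d ≠ 0) (ht0 : 0 ≤ t) (ht : 2 ^ n - 2 ^ k = d * t) :
    mstdSet n k d = mstdBlocks n k d t := by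
  have hY : ∀ j : ℕ, (2 ^ (n + 1) + d) + d * t - (2 ^ n - 2 ^ j) =
      (2 : ℤ) ^ n + (t + 1) * d + 2 ^ j := fun j => by ring
  ext a
  simp only [mstdSet, mem_mstdBlocks, mem_union, mem_image, mem_singleton,
    exists_exists_and_eq_and, ht, hY, Int.mul_ediv_cancel_left _ hd, mem_Icc]
  constructor
  · rintro (((hX | hY) | ⟨i, hi, rfl⟩) | rfl)
    · exact .inl hX
    · exact .inr (.inr hY)
    · exact .inr (.inl ⟨i, by omega, rfl⟩)
    · exact .inr (.inl ⟨0, by omega, by simp⟩)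
  · rintro (hX | ⟨i, hi, rfl⟩ | hY)
    · exact .inl (.inl (.inl hX))
    · rcases hi.1.eq_or_lt with rfl | hi0
      · exact .inr (by simp)
      · exact .inl (.inr ⟨i, by omega, rfl⟩)
    · exact .inl (.inl (.inr hY))

theorem two_pow_sub_two_pow_mem_mstdBlocks {j : ℕ} (hj : j ∈ Icc k n) :
    2 ^ n - 2 ^ j ∈ mstdBlocks n k d t :=
  mem_mstdBlocks.2 (.inl ⟨j, hj, rfl⟩)

theorem two_pow_add_mul_mem_mstdBlocks {i : ℤ} (hi : i ∈ Icc 0 t) :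
    2 ^ n + i * d ∈ mstdBlocks n k d t :=
  mem_mstdBlocks.2 (.inr (.inl ⟨i, hi, rfl⟩))

theorem two_pow_add_two_pow_mem_mstdBlocks {j : ℕ} (hj : j ∈ Icc k n) :
    2 ^ n + (t + 1) * d + 2 ^ j ∈ mstdBlocks n k d t :=
  mem_mstdBlocks.2 (.inr (.inr ⟨j, hj, rfl⟩))

theorem two_pow_mem_mstdBlocks (ht0 : 0 ≤ t) : 2 ^ n ∈ mstdBlocks n k d t := by
  simpa using two_pow_add_mul_mem_mstdBlocks (n := n) (k := k) (d := d)
    (mem_Icc.2 ⟨le_rfl, ht0⟩)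

theorem two_pow_add_mem_mstdBlocks (ht1 : 1 ≤ t) : 2 ^ n + d ∈ mstdBlocks n k d t := by
  simpa using two_pow_add_mul_mem_mstdBlocks (n := n) (k := k) (d := d)
    (mem_Icc.2 ⟨zero_le_one, ht1⟩)

theorem isNormalised_mstdBlocks (hkn : k ≤ n) (hd : 0 ≤ d) (hcop : IsCoprime 2 d)
    (ht1 : 1 ≤ t) :
    IsNormalised (mstdBlocks n k d t) := by
  refine ⟨by simpa using two_pow_sub_two_pow_mem_mstdBlocks (mem_Icc.2 ⟨hkn, le_rfl⟩),
    ?_, ?_⟩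
  · intro a ha
    rcases mem_mstdBlocks.1 ha with ⟨j, hj, rfl⟩ | ⟨i, hi, rfl⟩ | ⟨j, hj, rfl⟩
    · have : (2 : ℤ) ^ j ≤ 2 ^ n := pow_le_pow_right₀ (by norm_num) (mem_Icc.1 hj).2
      linarith
    · have := mul_nonneg (mem_Icc.1 hi).1 hd
      positivity
    · have := mul_nonneg (show 0 ≤ t + 1 by omega) hd
      positivity
  · have hN := gcd_dvd (f := id) (two_pow_mem_mstdBlocks (n := n) (k := k) (d := d) (t := t)
      (by omega))
    have hNd := gcd_dvd (f := id) (two_pow_add_mem_mstdBlocks (n := n) (k := k) (d := d) ht1)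
    have hunit := hcop.pow_left.isUnit_of_dvd' hN (by simpa using dvd_sub hNd hN)
    rw [← Finset.normalize_gcd, normalize_eq_one.2 hunit]

theorem mstdBlocks_symmetric (ht0 : 0 ≤ t) :
    ∀ x ∈ insert (2 ^ n + (t + 1) * d) (mstdBlocks n k d t),
      2 ^ n + (t + 1) * d + 2 ^ n - x ∈ insert (2 ^ n + (t + 1) * d) (mstdBlocks n k d t) := by
  intro x hx
  rcases mem_insert.1 hx with rfl | hx
  · rw [add_sub_cancel_left]
    exact mem_insert_of_mem (two_pow_mem_mstdBlocks ht0)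
  rcases mem_mstdBlocks.1 hx with ⟨j, hj, rfl⟩ | ⟨i, hi, rfl⟩ | ⟨j, hj, rfl⟩
  · have := two_pow_add_two_pow_mem_mstdBlocks (t := t) (d := d) hj
    exact mem_insert_of_mem (by convert this using 1; ring)
  · rw [mem_Icc] at hi
    rcases hi.1.eq_or_lt with rfl | hi0
    · convert mem_insert_self _ _ using 1
      ring
    · have := two_pow_add_mul_mem_mstdBlocks (n := n) (k := k) (d := d) (t := t) (i := t + 1 - i)
        (mem_Icc.2 ⟨by omega, by omega⟩)
      exact mem_insert_of_mem (by convert this using 1; ring)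
  · have := two_pow_sub_two_pow_mem_mstdBlocks (t := t) (d := d) hj
    exact mem_insert_of_mem (by convert this using 1; ring)

theorem add_mem_add_mstdBlocks (hkn : k < n) (ht1 : 1 ≤ t) (ht : 2 ^ n - 2 ^ k = d * t)
    (ha : a ∈ mstdBlocks n k d t) :
    2 ^ n + (t + 1) * d + a ∈ mstdBlocks n k d t + mstdBlocks n k d t := by
  have hk : k ∈ Icc k n := mem_Icc.2 ⟨le_rfl, hkn.le⟩
  have hn : n ∈ Icc k n := mem_Icc.2 ⟨hkn.le, le_rfl⟩
  rcases mem_mstdBlocks.1 ha with ⟨j, hj, rfl⟩ | ⟨i, hi, rfl⟩ | ⟨j, hj, rfl⟩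
  · rcases (mem_Icc.1 hj).2.lt_or_eq with hjn | rfl
    · convert add_mem_add (two_pow_add_two_pow_mem_mstdBlocks hj)
        (two_pow_sub_two_pow_mem_mstdBlocks (mem_Icc.2 ⟨(mem_Icc.1 hj).1.trans j.le_succ, hjn⟩))
        using 1
      rw [pow_succ]
      ring
    · convert add_mem_add (two_pow_add_mem_mstdBlocks ht1)
        (two_pow_sub_two_pow_mem_mstdBlocks hk) using 1
      linarith
  · rw [mem_Icc] at hi
    rcases hi.2.lt_or_eq with hit | rfl
    · convert add_mem_add (two_pow_add_mul_mem_mstdBlocks (n := n) (k := k) (d := d)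
          (mem_Icc.2 ⟨by omega, le_refl t⟩))
        (two_pow_add_mul_mem_mstdBlocks (n := n) (k := k) (d := d) (i := i + 1)
          (mem_Icc.2 ⟨by omega, hit⟩)) using 1
      ring
    · convert add_mem_add (two_pow_sub_two_pow_mem_mstdBlocks hk)
        (two_pow_add_two_pow_mem_mstdBlocks hn) using 1
      linarith
  · rcases (mem_Icc.1 hj).1.lt_or_eq with hkj | rfl
    · obtain ⟨j, rfl⟩ := Nat.exists_eq_add_of_lt hkj
      have hj' : k + j ∈ Icc k n := mem_Icc.2 ⟨by omega, by have := (mem_Icc.1 hj).2; omega⟩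
      convert add_mem_add (two_pow_add_two_pow_mem_mstdBlocks hj')
        (two_pow_add_two_pow_mem_mstdBlocks hj') using 1
      rw [pow_succ]
      ring
    · convert add_mem_add (two_pow_add_two_pow_mem_mstdBlocks hn)
        (two_pow_add_mem_mstdBlocks ht1) using 1
      linarith

theorem exists_of_mem_mstdBlocks (hcop : IsCoprime 2 d) (hd : 1 < d)
    (ha : a ∈ mstdBlocks n k d t) :
    (∃ p : ℤ, 2 ^ k ≤ p ∧ p ≤ 2 ^ n ∧ ¬ d ∣ p ∧ a = 2 ^ n - p) ∨
      (∃ i : ℤ, 0 ≤ i * d ∧ i * d ≤ t * d ∧ a = 2 ^ n + i * d) ∨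
      ∃ p : ℤ, 2 ^ k ≤ p ∧ p ≤ 2 ^ n ∧ ¬ d ∣ p ∧ a = 2 ^ n + (t + 1) * d + p := by
  have hpow : ∀ j ∈ Icc k n,
      (2 : ℤ) ^ k ≤ 2 ^ j ∧ (2 : ℤ) ^ j ≤ 2 ^ n ∧ ¬ d ∣ 2 ^ j :=
    fun j hj => ⟨pow_le_pow_right₀ (by norm_num) (mem_Icc.1 hj).1,
      pow_le_pow_right₀ (by norm_num) (mem_Icc.1 hj).2, not_dvd_two_pow hcop hd j⟩
  rcases mem_mstdBlocks.1 ha with ⟨j, hj, rfl⟩ | ⟨i, hi, rfl⟩ | ⟨j, hj, rfl⟩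
  · exact .inl ⟨2 ^ j, (hpow j hj).1, (hpow j hj).2.1, (hpow j hj).2.2, rfl⟩
  · rw [mem_Icc] at hi
    exact .inr (.inl ⟨i, mul_nonneg hi.1 (by omega), mul_le_mul_of_nonneg_right hi.2 (by omega),
      rfl⟩)
  · exact .inr (.inr ⟨2 ^ j, (hpow j hj).1, (hpow j hj).2.1, (hpow j hj).2.2, rfl⟩)

theorem add_self_notMem_add_mstdBlocks (hcop : IsCoprime 2 d) (hd : 1 < d)
    (ht : 2 ^ n - 2 ^ k = d * t) :
    2 ^ n + (t + 1) * d + (2 ^ n + (t + 1) * d) ∉ mstdBlocks n k d t + mstdBlocks n k d t := by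
  have hK : (0 : ℤ) < 2 ^ k := by positivity
  intro h
  obtain ⟨p, hp, q, hq, hpq⟩ := mem_add.1 h
  rcases exists_of_mem_mstdBlocks hcop hd hp with
    ⟨x, hx1, hx2, hx, rfl⟩ | ⟨i, hi1, hi2, rfl⟩ | ⟨x, hx1, hx2, hx, rfl⟩ <;>
  rcases exists_of_mem_mstdBlocks hcop hd hq with
    ⟨y, hy1, hy2, hy, rfl⟩ | ⟨l, hl1, hl2, rfl⟩ | ⟨y, hy1, hy2, hy, rfl⟩
  all_goals first
    | linarith
    | exact hy ⟨t + 1 - i, by linarith⟩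
    | exact hx ⟨t + 1 - l, by linarith⟩

theorem sub_notMem_sub_mstdBlocks (hcop : IsCoprime 2 d) (hd : 1 < d)
    (ht : 2 ^ n - 2 ^ k = d * t) :
    2 ^ n + (t + 1) * d - 2 ^ n ∉ mstdBlocks n k d t - mstdBlocks n k d t := by
  have hK : (0 : ℤ) < 2 ^ k := by positivity
  intro h
  obtain ⟨p, hp, q, hq, hpq⟩ := mem_sub.1 h
  rcases exists_of_mem_mstdBlocks hcop hd hp with
    ⟨x, hx1, hx2, hx, rfl⟩ | ⟨i, hi1, hi2, rfl⟩ | ⟨x, hx1, hx2, hx, rfl⟩ <;>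
  rcases exists_of_mem_mstdBlocks hcop hd hq with
    ⟨y, hy1, hy2, hy, rfl⟩ | ⟨l, hl1, hl2, rfl⟩ | ⟨y, hy1, hy2, hy, rfl⟩
  all_goals first
    | linarith
    | exact hy ⟨t + 1 - i, by linarith⟩
    | exact hx ⟨l, by linarith⟩

end mstdBlocks

theorem thm2_general (n k : ℕ) (hk : k + 2 ≤ n)
    (d : ℤ) (hd : 1 < d) (hdvd : d ∣ 2 ^ (n - k) - 1)
    (X Y Z A : Finset ℤ) (m : ℤ)
    (hX : X = (Finset.Icc k n).image (fun j => (2 : ℤ) ^ n - 2 ^ j))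
    (hm : m = (2 ^ (n + 1) + d) + (2 ^ n - 2 ^ k))
    (hY : Y = X.image (fun x => m - x))
    (hZ : Z = (Finset.Icc (1 : ℤ) ((2 ^ n - 2 ^ k) / d)).image
      (fun j => 2 ^ n + j * d))
    (hA : A = X ∪ Y ∪ Z ∪ {2 ^ n}) :
    IsNormalised A ∧ (A + A).card = (A - A).card + 1 := by
  have hkn : k < n := by omega
  have hcop := isCoprime_two_of_dvd_two_pow_sub_one (by omega) hdvd
  obtain ⟨t, ht⟩ := dvd_two_pow_sub_two_pow hkn.le hdvd
  have htpos : 0 < t := by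
    have : (2 : ℤ) ^ k < 2 ^ n := pow_lt_pow_right₀ (by norm_num) hkn
    exact pos_of_mul_pos_right (ht ▸ sub_pos.2 this) (by omega)
  have hA' : A = mstdBlocks n k d t := by
    subst hX hm hY hZ hA
    exact mstdSet_eq_mstdBlocks (by omega) (by omega) ht
  subst hA'
  refine ⟨isNormalised_mstdBlocks hkn.le (by omega) hcop htpos, ?_⟩
  have hb : (0 : ℤ) < (t + 1) * d := mul_pos (by omega) (by omega)
  exact card_add_eq_card_sub_add_one_of_insert_symmetric (two_pow_mem_mstdBlocks (by omega))
    (mstdBlocks_symmetric (by omega)) (fun a ha => add_mem_add_mstdBlocks hkn htpos ht ha)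
    (add_self_notMem_add_mstdBlocks hcop hd ht) (sub_notMem_sub_mstdBlocks hcop hd ht)
    (by intro h; linarith)

/-- Theorem 2: for `n ≥ 3`, `0 ≤ k ≤ n−2` and `d > 1` a divisor of `2^(n−k) − 1`,
the set `A = X ∪ (m − X) ∪ Z ∪ {2^n}` is a normalised MSTD set with
`|A+A| = |A−A| + 1`. -/
theorem thm2 (n k : ℕ) (hn : 3 ≤ n) (hk : k + 2 ≤ n)
    (d : ℤ) (hd : 1 < d) (hdvd : d ∣ 2 ^ (n - k) - 1)
    (X Y Z A : Finset ℤ) (m : ℤ)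
    (hX : X = (Finset.Icc k n).image (fun j => (2 : ℤ) ^ n - 2 ^ j))
    (hm : m = (2 ^ (n + 1) + d) + (2 ^ n - 2 ^ k))
    (hY : Y = X.image (fun x => m - x))
    (hZ : Z = (Finset.Icc (1 : ℤ) ((2 ^ n - 2 ^ k) / d)).image
      (fun j => 2 ^ n + j * d))
    (hA : A = X ∪ Y ∪ Z ∪ {2 ^ n}) :
    IsNormalised A ∧ (A + A).card = (A - A).card + 1 :=
  thm2_general n k hk d hd hdvd X Y Z A m hX hm hY hZ hA
end

section
/- Let n ≥ 3 and 1 ≤ l ≤ n−2. Set X := {2^n − 2^j : 0 ≤ j ≤ n}, m := (2^(n+1)−1) + (2^n − 2^l), Y := m − X, and A := X ∪ Y ∪ {2^n}. Then A is a normalised MSTD set with |A+A| = |A−A| + 1. -/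
/-!
The set `S = X ∪ (m - X)` is symmetric about `m`, so `S + S = m + (S - S)` and the two have the
same size. Adjoining `c = 2^n` adds no new difference, because every `a - 2^n` with `a ∈ S` is
already a difference of two elements of `S` (consecutive terms of `X` differ by powers of two),
and by the symmetry no new sum except `2^(n+1) = c + c`. That this sum is new comes down to the
equation `2^n + 2^j = 2^i + 2^l + 1` having no solutions, by parity and size.
-/

open Finset Pointwise

section Reflection

variable {G : Type*} [AddCommGroup G] [DecidableEq G] {S : Finset G} {c m : G}

theorem card_add_self_eq_card_sub_self_of_reflect (hS : ∀ a ∈ S, m - a ∈ S) :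
    #(S + S) = #(S - S) := by
  have himage : (S + S).image (· - m) = S - S := by
    ext x
    simp only [mem_image, mem_add, mem_sub]
    constructor
    · rintro ⟨_, ⟨u, hu, v, hv, rfl⟩, rfl⟩
      exact ⟨u, hu, m - v, hS v hv, by abel⟩
    · rintro ⟨u, hu, v, hv, rfl⟩
      exact ⟨u + (m - v), ⟨u, hu, m - v, hS v hv, rfl⟩, by abel⟩
  rw [← himage, card_image_of_injective _ sub_left_injective]

theorem insert_sub_insert_eq_sub_self (hS : S.Nonempty) (hc : ∀ a ∈ S, a - c ∈ S - S) :
    insert c S - insert c S = S - S := by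
  refine (sub_subset_sub (subset_insert c S) (subset_insert c S)).antisymm' ?_
  rw [sub_subset_iff]
  simp only [mem_insert, forall_eq_or_imp]
  refine ⟨⟨?_, fun a ha => ?_⟩, fun a ha => ⟨hc a ha, fun b hb => sub_mem_sub ha hb⟩⟩
  · obtain ⟨a, ha⟩ := hS
    rw [sub_self, ← sub_self a]
    exact sub_mem_sub ha ha
  · obtain ⟨u, hu, v, hv, huv⟩ := mem_sub.1 (hc a ha)
    exact mem_sub.2 ⟨v, hv, u, hu, by rw [← neg_sub, huv, neg_sub]⟩

theorem insert_add_insert_eq (hc : ∀ a ∈ S, c + a ∈ S + S) :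
    insert c S + insert c S = insert (c + c) (S + S) := by
  refine subset_antisymm ?_ (insert_subset (add_mem_add (mem_insert_self c S)
    (mem_insert_self c S)) (add_subset_add (subset_insert c S) (subset_insert c S)))
  rw [add_subset_iff]
  simp only [mem_insert, forall_eq_or_imp]
  exact ⟨⟨Or.inl trivial, fun a ha => Or.inr (hc a ha)⟩,
    fun a ha => ⟨Or.inr (add_comm c a ▸ hc a ha), fun b hb => Or.inr (add_mem_add ha hb)⟩⟩

theorem card_insert_add_insert_eq_card_insert_sub_insert_add_one (hS : S.Nonempty)
    (hsymm : ∀ a ∈ S, m - a ∈ S) (hc : ∀ a ∈ S, a - c ∈ S - S) (hcc : c + c ∉ S + S) :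
    #(insert c S + insert c S) = #(insert c S - insert c S) + 1 := by
  have hc' : ∀ a ∈ S, c + a ∈ S + S := by
    intro a ha
    obtain ⟨u, hu, v, hv, huv⟩ := mem_sub.1 (hc (m - a) (hsymm a ha))
    exact mem_add.2 ⟨m - u, hsymm u hu, v, hv, by rw [sub_add, huv]; abel⟩
  rw [insert_add_insert_eq hc', insert_sub_insert_eq_sub_self hS hc, card_insert_of_notMem hcc,
    card_add_self_eq_card_sub_self_of_reflect hsymm]

end Reflection

theorem two_pow_add_two_pow_ne {n l i j : ℕ} (hl : 1 ≤ l) (hln : l + 2 ≤ n) :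
    2 ^ n + 2 ^ j ≠ 2 ^ i + 2 ^ l + 1 := by
  intro h
  have hl4 : 2 ^ l * 4 ≤ 2 ^ n := by
    calc 2 ^ l * 4 = 2 ^ (l + 2) := by ring
      _ ≤ 2 ^ n := Nat.pow_le_pow_right two_pos hln
  have := Nat.one_le_two_pow (n := l)
  obtain _ | i := i
  · have := Nat.one_le_two_pow (n := j)
    omega
  obtain _ | j := j
  · have hi : i + 2 ≤ n :=
      (Nat.pow_lt_pow_iff_right (by norm_num)).1 (by omega : 2 ^ (i + 1) < 2 ^ n)
    have : 2 ^ (i + 1) * 2 ≤ 2 ^ n := by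
      calc 2 ^ (i + 1) * 2 = 2 ^ (i + 2) := by ring
        _ ≤ 2 ^ n := Nat.pow_le_pow_right two_pos hi
    omega
  · have : 2 ∣ 2 ^ n := dvd_pow_self 2 (by omega)
    have : 2 ∣ 2 ^ l := dvd_pow_self 2 (by omega)
    rw [pow_succ, pow_succ] at h
    omega

namespace PowTwoMSTD

def X (n : ℕ) : Finset ℤ := (Icc 0 n).image fun j => (2 : ℤ) ^ n - 2 ^ j

def m (n l : ℕ) : ℤ := (2 ^ (n + 1) - 1) + (2 ^ n - 2 ^ l)

def S (n l : ℕ) : Finset ℤ := X n ∪ (X n).image fun x => m n l - x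

variable {n l j : ℕ} {a : ℤ}

theorem mem_X : a ∈ X n ↔ ∃ j ≤ n, 2 ^ n - 2 ^ j = a := by
  simp [X]

theorem mem_S :
    a ∈ S n l ↔ ∃ j ≤ n, 2 ^ n - 2 ^ j = a ∨ m n l - (2 ^ n - 2 ^ j) = a := by
  simp only [S, mem_union, mem_image, mem_X]
  aesop

theorem two_pow_sub_mem_S (hj : j ≤ n) : 2 ^ n - 2 ^ j ∈ S n l :=
  mem_S.2 ⟨j, hj, .inl rfl⟩

theorem m_sub_two_pow_sub_mem_S (hj : j ≤ n) : m n l - (2 ^ n - 2 ^ j) ∈ S n l :=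
  mem_S.2 ⟨j, hj, .inr rfl⟩

theorem zero_mem_S : 0 ∈ S n l := by
  simpa using two_pow_sub_mem_S (n := n) (l := l) le_rfl

theorem m_sub_mem_S (ha : a ∈ S n l) : m n l - a ∈ S n l := by
  obtain ⟨j, hj, rfl | rfl⟩ := mem_S.1 ha
  · exact m_sub_two_pow_sub_mem_S hj
  · simpa using two_pow_sub_mem_S hj

theorem sub_two_pow_mem_sub_S (hl : l ≤ n) (ha : a ∈ S n l) : a - 2 ^ n ∈ S n l - S n l := by
  obtain ⟨j, hj, rfl | rfl⟩ := mem_S.1 ha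
  · obtain hjn | rfl := hj.lt_or_eq
    · refine mem_sub.2 ⟨_, two_pow_sub_mem_S (j := j + 1) hjn, _, two_pow_sub_mem_S hj, ?_⟩
      ring
    · refine mem_sub.2
        ⟨_, two_pow_sub_mem_S (Nat.zero_le j), _, m_sub_two_pow_sub_mem_S hl, ?_⟩
      simp only [m]
      ring
  · obtain _ | k := j
    · refine mem_sub.2 ⟨_, two_pow_sub_mem_S hl, _, two_pow_sub_mem_S le_rfl, ?_⟩
      simp only [m]
      ring
    · refine mem_sub.2 ⟨_, m_sub_two_pow_sub_mem_S (Nat.le_of_succ_le hj), _,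
        two_pow_sub_mem_S (Nat.le_of_succ_le hj), ?_⟩
      ring

theorem two_pow_lt_m_sub (hl : l < n) : (2 : ℤ) ^ n < m n l - (2 ^ n - 2 ^ j) := by
  have : (2 : ℤ) ^ l < 2 ^ n := pow_lt_pow_right₀ (by norm_num) hl
  have : (0 : ℤ) < 2 ^ j := by positivity
  simp only [m]
  rw [pow_succ]
  linarith

theorem two_pow_sub_add_m_sub_ne (hl : 1 ≤ l) (hln : l + 2 ≤ n) (i j : ℕ) :
    2 ^ n - 2 ^ i + (m n l - (2 ^ n - 2 ^ j)) ≠ 2 ^ n + 2 ^ n := by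
  intro h
  have : (2 : ℤ) ^ n + 2 ^ j = 2 ^ i + 2 ^ l + 1 := by
    simp only [m] at h
    rw [pow_succ] at h
    linarith
  exact two_pow_add_two_pow_ne hl hln (by exact_mod_cast this)

theorem two_pow_add_two_pow_notMem_add_S (hl : 1 ≤ l) (hln : l + 2 ≤ n) :
    (2 : ℤ) ^ n + 2 ^ n ∉ S n l + S n l := by
  have hX (i : ℕ) : (2 : ℤ) ^ n - 2 ^ i < 2 ^ n := by
    have : (0 : ℤ) < 2 ^ i := by positivity
    linarith
  have hY (j : ℕ) := two_pow_lt_m_sub (n := n) (l := l) (j := j) (by omega)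
  simp only [mem_add, mem_S, not_exists, not_and]
  rintro _ ⟨i, -, rfl | rfl⟩ _ ⟨j, -, rfl | rfl⟩ h
  · linarith [hX i, hX j]
  · exact two_pow_sub_add_m_sub_ne hl hln i j h
  · exact two_pow_sub_add_m_sub_ne hl hln j i (by rwa [add_comm])
  · linarith [hY i, hY j]

theorem isNormalised_insert_S (hl : l < n) : IsNormalised (insert (2 ^ n) (S n l)) := by
  refine ⟨mem_insert_of_mem zero_mem_S, ?_, ?_⟩
  · simp only [mem_insert, forall_eq_or_imp, mem_S]
    refine ⟨by positivity, ?_⟩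
    rintro _ ⟨j, hj, rfl | rfl⟩
    · exact sub_nonneg.2 (pow_le_pow_right₀ (by norm_num) hj)
    · exact (two_pow_lt_m_sub hl).le.trans' (by positivity)
  · have h₁ : (insert (2 ^ n) (S n l)).gcd id ∣ 2 ^ n := gcd_dvd (mem_insert_self _ _)
    have h₂ : (insert (2 ^ n) (S n l)).gcd id ∣ 2 ^ n - 2 ^ 0 :=
      gcd_dvd (mem_insert_of_mem (two_pow_sub_mem_S (Nat.zero_le n)))
    have h : (insert (2 ^ n) (S n l)).gcd id ∣ 1 := by simpa using dvd_sub h₁ h₂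
    rw [← Finset.normalize_gcd]
    exact normalize_eq_one.2 (isUnit_of_dvd_one h)

end PowTwoMSTD

theorem thm3_general (n l : ℕ) (hl1 : 1 ≤ l) (hl2 : l + 2 ≤ n)
    (X Y A : Finset ℤ) (m : ℤ)
    (hX : X = (Finset.Icc 0 n).image (fun j => (2 : ℤ) ^ n - 2 ^ j))
    (hm : m = (2 ^ (n + 1) - 1) + (2 ^ n - 2 ^ l))
    (hY : Y = X.image (fun x => m - x))
    (hA : A = X ∪ Y ∪ {2 ^ n}) :
    IsNormalised A ∧ (A + A).card = (A - A).card + 1 := by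
  have hA' : A = insert (2 ^ n) (PowTwoMSTD.S n l) := by
    subst_vars
    rw [union_comm, ← insert_eq]
    rfl
  subst hA'
  exact ⟨PowTwoMSTD.isNormalised_insert_S (by omega),
    card_insert_add_insert_eq_card_insert_sub_insert_add_one ⟨0, PowTwoMSTD.zero_mem_S⟩
      (fun _ => PowTwoMSTD.m_sub_mem_S) (fun _ => PowTwoMSTD.sub_two_pow_mem_sub_S (by omega))
      (PowTwoMSTD.two_pow_add_two_pow_notMem_add_S hl1 hl2)⟩

/-- Theorem 3: for `n ≥ 3` and `1 ≤ l ≤ n−2`, the set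
`A = X ∪ (m − X) ∪ {2^n}` is a normalised MSTD set with `|A+A| = |A−A| + 1`. -/
theorem thm3 (n l : ℕ) (hn : 3 ≤ n) (hl1 : 1 ≤ l) (hl2 : l + 2 ≤ n)
    (X Y A : Finset ℤ) (m : ℤ)
    (hX : X = (Finset.Icc 0 n).image (fun j => (2 : ℤ) ^ n - 2 ^ j))
    (hm : m = (2 ^ (n + 1) - 1) + (2 ^ n - 2 ^ l))
    (hY : Y = X.image (fun x => m - x))
    (hA : A = X ∪ Y ∪ {2 ^ n}) :
    IsNormalised A ∧ (A + A).card = (A - A).card + 1 :=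
  thm3_general n l hl1 hl2 X Y A m hX hm hY hA
end

section
/- Let n ≥ 2 and k ≥ 3 be integers. Set X := {2j : 0 ≤ j < n}, m := 2(k+1)n − 2, Y := m − X, Z := {2jn − 1 : 1 ≤ j ≤ k}, B := X ∪ Y ∪ Z, A* := B ∪ {2n}, and A := A* ∪ {m+2}. Then A* and A are both MSTD sets, and |A*+A*| − |A*−A*| = 1 and |A+A| − |A−A| = 1. -/
open Finset Pointwise

/-- The set A* written explicitly. -/
noncomputable def Aset (n k : ℤ) : Finset ℤ :=
  (((Finset.Ico 0 n).image fun j => 2*j) ∪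
   ((Finset.Ico 0 n).image fun j => 2*(k+1)*n - 2 - 2*j) ∪
   ((Finset.Icc 1 k).image fun j => 2*j*n - 1)) ∪ {2*n}

lemma mem_Aset {n k a : ℤ} :
    a ∈ Aset n k ↔
      (∃ i, 0 ≤ i ∧ i < n ∧ a = 2*i) ∨
      (∃ i, 0 ≤ i ∧ i < n ∧ a = 2*(k+1)*n - 2 - 2*i) ∨
      (∃ j, 1 ≤ j ∧ j ≤ k ∧ a = 2*j*n - 1) ∨ a = 2*n := by
  simp only [Aset, mem_union, mem_image, mem_Ico, mem_Icc, mem_singleton]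
  constructor
  · rintro (((⟨i,⟨h1,h2⟩,rfl⟩|⟨i,⟨h1,h2⟩,rfl⟩)|⟨j,⟨h1,h2⟩,rfl⟩)|h)
    · exact Or.inl ⟨i,h1,h2,rfl⟩
    · exact Or.inr (Or.inl ⟨i,h1,h2,rfl⟩)
    · exact Or.inr (Or.inr (Or.inl ⟨j,h1,h2,rfl⟩))
    · exact Or.inr (Or.inr (Or.inr h))
  · rintro (⟨i,h1,h2,rfl⟩|⟨i,h1,h2,rfl⟩|⟨j,h1,h2,rfl⟩|h)
    · exact Or.inl (Or.inl (Or.inl ⟨i,⟨h1,h2⟩,rfl⟩))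
    · exact Or.inl (Or.inl (Or.inr ⟨i,⟨h1,h2⟩,rfl⟩))
    · exact Or.inl (Or.inr ⟨j,⟨h1,h2⟩,rfl⟩)
    · exact Or.inr h

/-- division splitting lemma -/
lemma splitDiv {n K t : ℤ} (hn : 0 < n) (h1 : 0 ≤ t) (h2 : t < K*n) :
    ∃ q r, 0 ≤ q ∧ q < K ∧ 0 ≤ r ∧ r < n ∧ t = q*n + r := by
  refine ⟨t / n, t % n, Int.ediv_nonneg h1 hn.le, ?_, Int.emod_nonneg t hn.ne',
    Int.emod_lt_of_pos t hn, by rw [mul_comm]; exact (Int.mul_ediv_add_emod t n).symm⟩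
  by_contra h
  push_neg at h
  have : K * n ≤ (t/n) * n := mul_le_mul_of_nonneg_right h hn.le
  have := Int.ediv_mul_le t hn.ne'
  omega

lemma disj_of_bounds {s t : Finset ℤ} (b : ℤ) (hs : ∀ x ∈ s, x ≤ b)
    (ht : ∀ x ∈ t, b < x) : Disjoint s t := by
  rw [Finset.disjoint_left]
  intro x hx hx'
  exact absurd (hs x hx) (not_le.mpr (ht x hx'))
noncomputable def Ssum (n k : ℤ) : Finset ℤ :=
  ((Finset.Icc 0 (2*n)).image fun t => 2*t) ∪
  ((Finset.Icc 3 (k-1)).image fun j => 2*j*n - 2) ∪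
  ((Finset.Icc (k*n-1) ((k+2)*n-1)).image fun t => 2*t) ∪
  ((Finset.Icc (k+3) (2*k)).image fun j => 2*j*n - 2) ∪
  ((Finset.Icc (2*k*n) ((2*k+2)*n-2)).image fun t => 2*t) ∪
  ((Finset.Icc n ((2*k+1)*n-1)).image fun t => 2*t-1)

noncomputable def Ddiff (n k : ℤ) : Finset ℤ :=
  ((Finset.Icc (-n) n).image fun t => 2*t) ∪
  ((Finset.Icc 2 (k-2)).image fun j => 2*j*n) ∪
  ((Finset.Icc 2 (k-2)).image fun j => -(2*j*n)) ∪
  ((Finset.Icc ((k-1)*n) ((k+1)*n-1)).image fun t => 2*t) ∪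
  ((Finset.Icc ((k-1)*n) ((k+1)*n-1)).image fun t => -(2*t)) ∪
  ((Finset.Icc (1-k*n) (k*n)).image fun t => 2*t-1)
lemma inj2 : Function.Injective (fun t : ℤ => 2*t) := fun a b h => by simp only [] at h; omega

lemma injjn {n : ℤ} (hn : 2 ≤ n) : Function.Injective (fun j : ℤ => 2*j*n - 2) := by
  intro a b h
  simp only at h
  have : (a - b) * n = 0 := by ring_nf; linarith
  rcases mul_eq_zero.mp this with h' | h' <;> omega

lemma injjn' {n : ℤ} (hn : 2 ≤ n) : Function.Injective (fun j : ℤ => 2*j*n) := by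
  intro a b h
  simp only at h
  have : (a - b) * n = 0 := by ring_nf; linarith
  rcases mul_eq_zero.mp this with h' | h' <;> omega

lemma injodd : Function.Injective (fun t : ℤ => 2*t-1) := fun a b h => by simp only [] at h; omega

lemma injneg2 : Function.Injective (fun t : ℤ => -(2*t)) := fun a b h => by simp only [] at h; omega

lemma injnegjn {n : ℤ} (hn : 2 ≤ n) : Function.Injective (fun j : ℤ => -(2*j*n)) := by
  intro a b h
  simp only [neg_inj] at h
  have : (a - b) * n = 0 := by ring_nf; linarith
  rcases mul_eq_zero.mp this with h' | h' <;> omega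

lemma card_Ssum {n k : ℤ} (hn : 2 ≤ n) (hk : 3 ≤ k) :
    ((Ssum n k).card : ℤ) = 2*k*n + 2*k + 6*n - 4 := by
  have hn0 : (0:ℤ) ≤ n := by omega
  have hkn : 3*n ≤ k*n := mul_le_mul_of_nonneg_right hk hn0
  have d1 : Disjoint ((Finset.Icc 0 (2*n)).image fun t : ℤ => 2*t)
      ((Finset.Icc 3 (k-1)).image fun j => 2*j*n - 2) := by
    apply disj_of_bounds (4*n)
    · intro x hx; simp only [mem_image, mem_Icc] at hx; obtain ⟨t,⟨h1,h2⟩,rfl⟩ := hx; omega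
    · intro x hx; simp only [mem_image, mem_Icc] at hx; obtain ⟨j,⟨h1,h2⟩,rfl⟩ := hx
      nlinarith [mul_le_mul_of_nonneg_right h1 hn0]
  have d2 : Disjoint (((Finset.Icc 0 (2*n)).image fun t : ℤ => 2*t) ∪
      ((Finset.Icc 3 (k-1)).image fun j => 2*j*n - 2))
      ((Finset.Icc (k*n-1) ((k+2)*n-1)).image fun t => 2*t) := by
    apply disj_of_bounds (2*k*n - 3)
    · intro x hx
      simp only [mem_union, mem_image, mem_Icc] at hx
      rcases hx with ⟨t,⟨h1,h2⟩,rfl⟩|⟨j,⟨h1,h2⟩,rfl⟩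
      · nlinarith
      · nlinarith [mul_le_mul_of_nonneg_right h2 hn0]
    · intro x hx; simp only [mem_image, mem_Icc] at hx; obtain ⟨t,⟨h1,h2⟩,rfl⟩ := hx
      nlinarith
  have d3 : Disjoint ((((Finset.Icc 0 (2*n)).image fun t : ℤ => 2*t) ∪
      ((Finset.Icc 3 (k-1)).image fun j => 2*j*n - 2)) ∪
      ((Finset.Icc (k*n-1) ((k+2)*n-1)).image fun t => 2*t))
      ((Finset.Icc (k+3) (2*k)).image fun j => 2*j*n - 2) := by
    apply disj_of_bounds (2*(k+2)*n - 2)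
    · intro x hx
      simp only [mem_union, mem_image, mem_Icc] at hx
      rcases hx with (⟨t,⟨h1,h2⟩,rfl⟩|⟨j,⟨h1,h2⟩,rfl⟩)|⟨t,⟨h1,h2⟩,rfl⟩
      · nlinarith
      · nlinarith [mul_le_mul_of_nonneg_right h2 hn0]
      · nlinarith
    · intro x hx; simp only [mem_image, mem_Icc] at hx; obtain ⟨j,⟨h1,h2⟩,rfl⟩ := hx
      nlinarith [mul_le_mul_of_nonneg_right h1 hn0]
  have d4 : Disjoint (((((Finset.Icc 0 (2*n)).image fun t : ℤ => 2*t) ∪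
      ((Finset.Icc 3 (k-1)).image fun j => 2*j*n - 2)) ∪
      ((Finset.Icc (k*n-1) ((k+2)*n-1)).image fun t => 2*t)) ∪
      ((Finset.Icc (k+3) (2*k)).image fun j => 2*j*n - 2))
      ((Finset.Icc (2*k*n) ((2*k+2)*n-2)).image fun t => 2*t) := by
    apply disj_of_bounds (4*k*n - 2)
    · intro x hx
      simp only [mem_union, mem_image, mem_Icc] at hx
      rcases hx with ((⟨t,⟨h1,h2⟩,rfl⟩|⟨j,⟨h1,h2⟩,rfl⟩)|⟨t,⟨h1,h2⟩,rfl⟩)|⟨j,⟨h1,h2⟩,rfl⟩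
      · nlinarith
      · nlinarith [mul_le_mul_of_nonneg_right h2 hn0]
      · nlinarith
      · nlinarith [mul_le_mul_of_nonneg_right h2 hn0]
    · intro x hx; simp only [mem_image, mem_Icc] at hx; obtain ⟨t,⟨h1,h2⟩,rfl⟩ := hx
      nlinarith
  have d5 : Disjoint ((((((Finset.Icc 0 (2*n)).image fun t : ℤ => 2*t) ∪
      ((Finset.Icc 3 (k-1)).image fun j => 2*j*n - 2)) ∪
      ((Finset.Icc (k*n-1) ((k+2)*n-1)).image fun t => 2*t)) ∪
      ((Finset.Icc (k+3) (2*k)).image fun j => 2*j*n - 2)) ∪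
      ((Finset.Icc (2*k*n) ((2*k+2)*n-2)).image fun t => 2*t))
      ((Finset.Icc n ((2*k+1)*n-1)).image fun t => 2*t-1) := by
    rw [Finset.disjoint_left]
    intro x hx hx6
    simp only [mem_image, mem_Icc] at hx6
    obtain ⟨t,⟨_,_⟩,rfl⟩ := hx6
    simp only [mem_union, mem_image, mem_Icc] at hx
    rcases hx with (((⟨s,_,h⟩|⟨j,_,h⟩)|⟨s,_,h⟩)|⟨j,_,h⟩)|⟨s,_,h⟩
    · omega
    · obtain ⟨c,hc⟩ : ∃ c:ℤ, 2*j*n-2 = 2*c := ⟨j*n-1, by ring⟩; rw [h] at hc; omega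
    · omega
    · obtain ⟨c,hc⟩ : ∃ c:ℤ, 2*j*n-2 = 2*c := ⟨j*n-1, by ring⟩; rw [h] at hc; omega
    · omega
  rw [Ssum, card_union_of_disjoint d5, card_union_of_disjoint d4, card_union_of_disjoint d3,
    card_union_of_disjoint d2, card_union_of_disjoint d1,
    Finset.card_image_of_injective _ inj2, Finset.card_image_of_injective _ (injjn hn),
    Finset.card_image_of_injective _ inj2, Finset.card_image_of_injective _ (injjn hn),
    Finset.card_image_of_injective _ inj2, Finset.card_image_of_injective _ injodd,
    Int.card_Icc, Int.card_Icc, Int.card_Icc, Int.card_Icc, Int.card_Icc, Int.card_Icc]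
  push_cast
  rw [Int.toNat_of_nonneg (by nlinarith), Int.toNat_of_nonneg (by nlinarith),
    Int.toNat_of_nonneg (by nlinarith), Int.toNat_of_nonneg (by nlinarith),
    Int.toNat_of_nonneg (by nlinarith), Int.toNat_of_nonneg (by nlinarith)]
  ring
lemma card_Ddiff {n k : ℤ} (hn : 2 ≤ n) (hk : 3 ≤ k) :
    ((Ddiff n k).card : ℤ) = 2*k*n + 2*k + 6*n - 5 := by
  have hn0 : (0:ℤ) ≤ n := by omega
  have hkn : 3*n ≤ k*n := mul_le_mul_of_nonneg_right hk hn0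
  have e1 : Disjoint ((Finset.Icc (-n) n).image fun t : ℤ => 2*t)
      ((Finset.Icc 2 (k-2)).image fun j => 2*j*n) := by
    apply disj_of_bounds (2*n)
    · intro x hx; simp only [mem_image, mem_Icc] at hx; obtain ⟨t,⟨h1,h2⟩,rfl⟩ := hx; omega
    · intro x hx; simp only [mem_image, mem_Icc] at hx; obtain ⟨j,⟨h1,h2⟩,rfl⟩ := hx
      nlinarith [mul_le_mul_of_nonneg_right h1 hn0]
  have e2 : Disjoint (((Finset.Icc (-n) n).image fun t : ℤ => 2*t) ∪
      ((Finset.Icc 2 (k-2)).image fun j => 2*j*n))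
      ((Finset.Icc 2 (k-2)).image fun j => -(2*j*n)) := by
    refine (disj_of_bounds (-2*n-1) ?_ ?_).symm
    · intro x hx; simp only [mem_image, mem_Icc] at hx; obtain ⟨j,⟨h1,h2⟩,rfl⟩ := hx
      nlinarith [mul_le_mul_of_nonneg_right h1 hn0]
    · intro x hx
      simp only [mem_union, mem_image, mem_Icc] at hx
      rcases hx with ⟨t,⟨h1,h2⟩,rfl⟩|⟨j,⟨h1,h2⟩,rfl⟩
      · omega
      · nlinarith [mul_le_mul_of_nonneg_right h1 hn0]
  have e3 : Disjoint ((((Finset.Icc (-n) n).image fun t : ℤ => 2*t) ∪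
      ((Finset.Icc 2 (k-2)).image fun j => 2*j*n)) ∪
      ((Finset.Icc 2 (k-2)).image fun j => -(2*j*n)))
      ((Finset.Icc ((k-1)*n) ((k+1)*n-1)).image fun t => 2*t) := by
    apply disj_of_bounds (2*(k-2)*n)
    · intro x hx
      simp only [mem_union, mem_image, mem_Icc] at hx
      rcases hx with (⟨t,⟨h1,h2⟩,rfl⟩|⟨j,⟨h1,h2⟩,rfl⟩)|⟨j,⟨h1,h2⟩,rfl⟩
      · nlinarith
      · nlinarith [mul_le_mul_of_nonneg_right h2 hn0]
      · nlinarith [mul_le_mul_of_nonneg_right h1 hn0]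
    · intro x hx; simp only [mem_image, mem_Icc] at hx; obtain ⟨t,⟨h1,h2⟩,rfl⟩ := hx
      nlinarith
  have e4 : Disjoint (((((Finset.Icc (-n) n).image fun t : ℤ => 2*t) ∪
      ((Finset.Icc 2 (k-2)).image fun j => 2*j*n)) ∪
      ((Finset.Icc 2 (k-2)).image fun j => -(2*j*n))) ∪
      ((Finset.Icc ((k-1)*n) ((k+1)*n-1)).image fun t => 2*t))
      ((Finset.Icc ((k-1)*n) ((k+1)*n-1)).image fun t => -(2*t)) := by
    refine (disj_of_bounds (-2*(k-1)*n) ?_ ?_).symm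
    · intro x hx; simp only [mem_image, mem_Icc] at hx; obtain ⟨t,⟨h1,h2⟩,rfl⟩ := hx
      nlinarith
    · intro x hx
      simp only [mem_union, mem_image, mem_Icc] at hx
      rcases hx with ((⟨t,⟨h1,h2⟩,rfl⟩|⟨j,⟨h1,h2⟩,rfl⟩)|⟨j,⟨h1,h2⟩,rfl⟩)|⟨t,⟨h1,h2⟩,rfl⟩
      · nlinarith
      · nlinarith [mul_le_mul_of_nonneg_right h1 hn0]
      · nlinarith [mul_le_mul_of_nonneg_right h2 hn0]
      · nlinarith
  have e5 : Disjoint ((((((Finset.Icc (-n) n).image fun t : ℤ => 2*t) ∪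
      ((Finset.Icc 2 (k-2)).image fun j => 2*j*n)) ∪
      ((Finset.Icc 2 (k-2)).image fun j => -(2*j*n))) ∪
      ((Finset.Icc ((k-1)*n) ((k+1)*n-1)).image fun t => 2*t)) ∪
      ((Finset.Icc ((k-1)*n) ((k+1)*n-1)).image fun t => -(2*t)))
      ((Finset.Icc (1-k*n) (k*n)).image fun t => 2*t-1) := by
    rw [Finset.disjoint_left]
    intro x hx hx6
    simp only [mem_image, mem_Icc] at hx6
    obtain ⟨t,⟨_,_⟩,rfl⟩ := hx6
    simp only [mem_union, mem_image, mem_Icc] at hx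
    rcases hx with (((⟨s,_,h⟩|⟨j,_,h⟩)|⟨j,_,h⟩)|⟨s,_,h⟩)|⟨s,_,h⟩
    · omega
    · obtain ⟨c,hc⟩ : ∃ c:ℤ, 2*j*n = 2*c := ⟨j*n, by ring⟩; rw [h] at hc; omega
    · obtain ⟨c,hc⟩ : ∃ c:ℤ, -(2*j*n) = 2*c := ⟨-(j*n), by ring⟩; rw [h] at hc; omega
    · omega
    · omega
  rw [Ddiff, card_union_of_disjoint e5, card_union_of_disjoint e4, card_union_of_disjoint e3,
    card_union_of_disjoint e2, card_union_of_disjoint e1,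
    Finset.card_image_of_injective _ inj2, Finset.card_image_of_injective _ (injjn' hn),
    Finset.card_image_of_injective _ (injnegjn hn), Finset.card_image_of_injective _ inj2,
    Finset.card_image_of_injective _ injneg2, Finset.card_image_of_injective _ injodd,
    Int.card_Icc, Int.card_Icc, Int.card_Icc, Int.card_Icc]
  push_cast
  rw [Int.toNat_of_nonneg (by nlinarith), Int.toNat_of_nonneg (by nlinarith),
    Int.toNat_of_nonneg (by nlinarith), Int.toNat_of_nonneg (by nlinarith)]
  ring
section helpers
variable {n k : ℤ}

lemma S1mem {x t : ℤ} (h1 : 0 ≤ t) (h2 : t ≤ 2*n) (hx : x = 2*t) : x ∈ Ssum n k := by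
  simp only [Ssum, mem_union, mem_image, mem_Icc]
  exact Or.inl <| Or.inl <| Or.inl <| Or.inl <| Or.inl ⟨t, ⟨h1,h2⟩, hx.symm⟩

lemma S2mem {x j : ℤ} (h1 : 3 ≤ j) (h2 : j ≤ k-1) (hx : x = 2*j*n-2) : x ∈ Ssum n k := by
  simp only [Ssum, mem_union, mem_image, mem_Icc]
  exact Or.inl <| Or.inl <| Or.inl <| Or.inl <| Or.inr ⟨j, ⟨h1,h2⟩, hx.symm⟩

lemma S3mem {x t : ℤ} (h1 : k*n-1 ≤ t) (h2 : t ≤ (k+2)*n-1) (hx : x = 2*t) : x ∈ Ssum n k := by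
  simp only [Ssum, mem_union, mem_image, mem_Icc]
  exact Or.inl <| Or.inl <| Or.inl <| Or.inr ⟨t, ⟨h1,h2⟩, hx.symm⟩

lemma S4mem {x j : ℤ} (h1 : k+3 ≤ j) (h2 : j ≤ 2*k) (hx : x = 2*j*n-2) : x ∈ Ssum n k := by
  simp only [Ssum, mem_union, mem_image, mem_Icc]
  exact Or.inl <| Or.inl <| Or.inr ⟨j, ⟨h1,h2⟩, hx.symm⟩

lemma S5mem {x t : ℤ} (h1 : 2*k*n ≤ t) (h2 : t ≤ (2*k+2)*n-2) (hx : x = 2*t) : x ∈ Ssum n k := by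
  simp only [Ssum, mem_union, mem_image, mem_Icc]
  exact Or.inl <| Or.inr ⟨t, ⟨h1,h2⟩, hx.symm⟩

lemma S6mem {x t : ℤ} (h1 : n ≤ t) (h2 : t ≤ (2*k+1)*n-1) (hx : x = 2*t-1) : x ∈ Ssum n k := by
  simp only [Ssum, mem_union, mem_image, mem_Icc]
  exact Or.inr ⟨t, ⟨h1,h2⟩, hx.symm⟩

lemma D1mem {x t : ℤ} (h1 : -n ≤ t) (h2 : t ≤ n) (hx : x = 2*t) : x ∈ Ddiff n k := by
  simp only [Ddiff, mem_union, mem_image, mem_Icc]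
  exact Or.inl <| Or.inl <| Or.inl <| Or.inl <| Or.inl ⟨t, ⟨h1,h2⟩, hx.symm⟩

lemma D2mem {x j : ℤ} (h1 : 2 ≤ j) (h2 : j ≤ k-2) (hx : x = 2*j*n) : x ∈ Ddiff n k := by
  simp only [Ddiff, mem_union, mem_image, mem_Icc]
  exact Or.inl <| Or.inl <| Or.inl <| Or.inl <| Or.inr ⟨j, ⟨h1,h2⟩, hx.symm⟩

lemma D3mem {x j : ℤ} (h1 : 2 ≤ j) (h2 : j ≤ k-2) (hx : x = -(2*j*n)) : x ∈ Ddiff n k := by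
  simp only [Ddiff, mem_union, mem_image, mem_Icc]
  exact Or.inl <| Or.inl <| Or.inl <| Or.inr ⟨j, ⟨h1,h2⟩, hx.symm⟩

lemma D4mem {x t : ℤ} (h1 : (k-1)*n ≤ t) (h2 : t ≤ (k+1)*n-1) (hx : x = 2*t) : x ∈ Ddiff n k := by
  simp only [Ddiff, mem_union, mem_image, mem_Icc]
  exact Or.inl <| Or.inl <| Or.inr ⟨t, ⟨h1,h2⟩, hx.symm⟩

lemma D5mem {x t : ℤ} (h1 : (k-1)*n ≤ t) (h2 : t ≤ (k+1)*n-1) (hx : x = -(2*t)) : x ∈ Ddiff n k := by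
  simp only [Ddiff, mem_union, mem_image, mem_Icc]
  exact Or.inl <| Or.inr ⟨t, ⟨h1,h2⟩, hx.symm⟩

lemma D6mem {x t : ℤ} (h1 : 1-k*n ≤ t) (h2 : t ≤ k*n) (hx : x = 2*t-1) : x ∈ Ddiff n k := by
  simp only [Ddiff, mem_union, mem_image, mem_Icc]
  exact Or.inr ⟨t, ⟨h1,h2⟩, hx.symm⟩

lemma AXmem {i : ℤ} (h1 : 0 ≤ i) (h2 : i < n) : 2*i ∈ Aset n k :=
  mem_Aset.mpr (Or.inl ⟨i,h1,h2,rfl⟩)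

lemma AYmem {i : ℤ} (h1 : 0 ≤ i) (h2 : i < n) : 2*(k+1)*n - 2 - 2*i ∈ Aset n k :=
  mem_Aset.mpr (Or.inr (Or.inl ⟨i,h1,h2,rfl⟩))

lemma AZmem {j : ℤ} (h1 : 1 ≤ j) (h2 : j ≤ k) : 2*j*n - 1 ∈ Aset n k :=
  mem_Aset.mpr (Or.inr (Or.inr (Or.inl ⟨j,h1,h2,rfl⟩)))

lemma Awmem : (2*n : ℤ) ∈ Aset n k := mem_Aset.mpr (Or.inr (Or.inr (Or.inr rfl)))

lemma addmem {s : Finset ℤ} {a b x : ℤ} (ha : a ∈ s) (hb : b ∈ s) (h : x = a + b) :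
    x ∈ s + s := h ▸ Finset.add_mem_add ha hb

lemma submem {s : Finset ℤ} {a b x : ℤ} (ha : a ∈ s) (hb : b ∈ s) (h : x = a - b) :
    x ∈ s - s := h ▸ Finset.sub_mem_sub ha hb

lemma splitDiv' {n K t : ℤ} (hn : 0 < n) (h1 : n ≤ t) (h2 : t < (K+1)*n) :
    ∃ q r, 1 ≤ q ∧ q ≤ K ∧ 0 ≤ r ∧ r < n ∧ t = q*n + r := by
  obtain ⟨q, r, hq0, hqK, hr0, hrn, ht⟩ := splitDiv hn (by linarith) h2
  refine ⟨q, r, ?_, by omega, hr0, hrn, ht⟩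
  by_contra h
  push_neg at h
  have : q * n ≤ 0 := mul_nonpos_of_nonpos_of_nonneg (by omega) hn.le
  omega

end helpers
lemma Aset_add {n k : ℤ} (hn : 2 ≤ n) (hk : 3 ≤ k) :
    Aset n k + Aset n k = Ssum n k := by
  have hn0 : (0:ℤ) ≤ n := by omega
  have hkn : 3*n ≤ k*n := mul_le_mul_of_nonneg_right hk hn0
  apply Finset.Subset.antisymm
  · rw [Finset.add_subset_iff]
    intro a ha b hb
    rw [mem_Aset] at ha hb
    rcases ha with ⟨i,hi0,hi1,rfl⟩|⟨i,hi0,hi1,rfl⟩|⟨j,hj1,hj2,rfl⟩|rfl <;>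
      rcases hb with ⟨i',hi0',hi1',rfl⟩|⟨i',hi0',hi1',rfl⟩|⟨j',hj1',hj2',rfl⟩|rfl
    -- X + X
    · exact S1mem (t := i+i') (by omega) (by omega) (by ring)
    -- X + Y
    · exact S3mem (t := (k+1)*n - 1 - i' + i) (by linarith) (by linarith) (by ring)
    -- X + Z
    · exact S6mem (t := i + j'*n)
        (by nlinarith [mul_le_mul_of_nonneg_right hj1' hn0])
        (by nlinarith [mul_le_mul_of_nonneg_right hj2' hn0]) (by ring)
    -- X + w
    · exact S1mem (t := i + n) (by omega) (by omega) (by ring)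
    -- Y + X
    · exact S3mem (t := (k+1)*n - 1 - i + i') (by linarith) (by linarith) (by ring)
    -- Y + Y
    · exact S5mem (t := (k+1)*n - 2 - i - i' + (k+1)*n) (by linarith) (by linarith) (by ring)
    -- Y + Z
    · exact S6mem (t := (k+1+j')*n - 1 - i)
        (by nlinarith [mul_le_mul_of_nonneg_right hj1' hn0])
        (by nlinarith [mul_le_mul_of_nonneg_right hj2' hn0]) (by ring)
    -- Y + w
    · exact S3mem (t := (k+2)*n - 1 - i) (by linarith) (by linarith) (by ring)
    -- Z + X
    · exact S6mem (t := i' + j*n)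
        (by nlinarith [mul_le_mul_of_nonneg_right hj1 hn0])
        (by nlinarith [mul_le_mul_of_nonneg_right hj2 hn0]) (by ring)
    -- Z + Y
    · exact S6mem (t := (k+1+j)*n - 1 - i')
        (by nlinarith [mul_le_mul_of_nonneg_right hj1 hn0])
        (by nlinarith [mul_le_mul_of_nonneg_right hj2 hn0]) (by ring)
    -- Z + Z
    · rcases eq_or_lt_of_le (by omega : (2:ℤ) ≤ j + j') with h2 | h2
      · obtain ⟨rfl, rfl⟩ : j = 1 ∧ j' = 1 := by omega
        exact S1mem (t := 2*n - 1) (by omega) (by omega) (by ring)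
      · by_cases hA : j + j' ≤ k - 1
        · exact S2mem (j := j + j') (by omega) hA (by ring)
        · by_cases hB : j + j' ≤ k + 2
          · exact S3mem (t := (j+j')*n - 1)
              (by nlinarith [mul_le_mul_of_nonneg_right (by omega : k ≤ j + j') hn0])
              (by nlinarith [mul_le_mul_of_nonneg_right hB hn0]) (by ring)
          · exact S4mem (j := j + j') (by omega) (by omega) (by ring)
    -- Z + w
    · exact S6mem (t := (j+1)*n)
        (by nlinarith [mul_le_mul_of_nonneg_right (by omega : (2:ℤ) ≤ j+1) hn0])
        (by nlinarith [mul_le_mul_of_nonneg_right (by omega : j+1 ≤ k+1) hn0]) (by ring)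
    -- w + X
    · exact S1mem (t := n + i') (by omega) (by omega) (by ring)
    -- w + Y
    · exact S3mem (t := (k+2)*n - 1 - i') (by linarith) (by linarith) (by ring)
    -- w + Z
    · exact S6mem (t := (j'+1)*n)
        (by nlinarith [mul_le_mul_of_nonneg_right (by omega : (2:ℤ) ≤ j'+1) hn0])
        (by nlinarith [mul_le_mul_of_nonneg_right (by omega : j'+1 ≤ k+1) hn0]) (by ring)
    -- w + w
    · exact S1mem (t := 2*n) (by omega) (by omega) (by ring)
  · intro x hx
    simp only [Ssum, mem_union, mem_image, mem_Icc] at hx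
    rcases hx with ((((⟨t,⟨h1,h2⟩,rfl⟩|⟨j,⟨h1,h2⟩,rfl⟩)|⟨t,⟨h1,h2⟩,rfl⟩)|⟨j,⟨h1,h2⟩,rfl⟩)|⟨t,⟨h1,h2⟩,rfl⟩)|⟨t,⟨h1,h2⟩,rfl⟩
    -- S1
    · by_cases hc1 : t ≤ n - 1
      · exact addmem (AXmem h1 (by omega)) (AXmem le_rfl (by omega)) (by ring)
      · by_cases hc2 : t ≤ 2*n - 2
        · exact addmem (AXmem (i := t - n) (by omega) (by omega)) Awmem (by ring)
        · by_cases hc3 : t = 2*n - 1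
          · exact addmem (AZmem (j := 1) le_rfl (by omega)) (AZmem (j := 1) le_rfl (by omega))
              (by rw [hc3]; ring)
          · have ht : t = 2*n := by omega
            exact addmem Awmem Awmem (by rw [ht]; ring)
    -- S2
    · exact addmem (AZmem (j := j - 1) (by omega) (by omega)) (AZmem (j := 1) le_rfl (by omega))
        (by ring)
    -- S3
    · by_cases hc1 : t = k*n - 1
      · exact addmem (AZmem (j := k - 1) (by omega) (by omega)) (AZmem (j := 1) le_rfl (by omega))
          (by rw [hc1]; ring)
      · by_cases hc2 : t = (k+2)*n - 1
        · exact addmem (AYmem (i := 0) le_rfl (by omega)) Awmem (by rw [hc2]; ring)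
        · have h2' : t + 1 ≤ (k+2)*n - 1 := Int.lt_iff_add_one_le.mp (lt_of_le_of_ne h2 hc2)
          have h1' : k*n - 1 + 1 ≤ t := Int.lt_iff_add_one_le.mp (lt_of_le_of_ne h1 (Ne.symm hc1))
          by_cases hc3 : 0 ≤ t - (k+1)*n + 1
          · exact addmem (AXmem (i := t - (k+1)*n + 1) hc3 (by linarith)) (AYmem (i := 0) le_rfl (by omega))
              (by ring)
          · exact addmem (AXmem (i := 0) le_rfl (by omega))
              (AYmem (i := (k+1)*n - 1 - t) (by linarith) (by linarith)) (by ring)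
    -- S4
    · exact addmem (AZmem (j := j - k) (by omega) (by omega)) (AZmem (j := k) (by omega) le_rfl)
        (by ring)
    -- S5
    · by_cases hc1 : (2*k+2)*n - 2 - t ≤ n - 1
      · exact addmem (AYmem (i := (2*k+2)*n - 2 - t) (by linarith) (by linarith))
          (AYmem (i := 0) le_rfl (by omega)) (by ring)
      · exact addmem (AYmem (i := n - 1) (by omega) (by omega))
          (AYmem (i := (2*k+2)*n - 2 - t - (n-1)) (by linarith) (by linarith)) (by ring)
    -- S6
    · by_cases hc : t ≤ (k+1)*n - 1
      · obtain ⟨q, r, hq1, hq2, hr1, hr2, ht⟩ :=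
          splitDiv' (n := n) (K := k) (by omega) h1 (by linarith)
        exact addmem (AXmem hr1 hr2) (AZmem hq1 hq2) (by rw [ht]; ring)
      · obtain ⟨q, r, hq1, hq2, hr1, hr2, ht⟩ :=
          splitDiv' (n := n) (K := k) (t := (2*k+2)*n - 1 - t) (by omega) (by linarith) (by linarith)
        exact addmem (AYmem hr1 hr2) (AZmem (j := k + 1 - q) (by omega) (by omega))
          (by linarith [ht])
lemma Aset_sub {n k : ℤ} (hn : 2 ≤ n) (hk : 3 ≤ k) :
    Aset n k - Aset n k = Ddiff n k := by
  have hn0 : (0:ℤ) ≤ n := by omega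
  have hkn : 3*n ≤ k*n := mul_le_mul_of_nonneg_right hk hn0
  apply Finset.Subset.antisymm
  · rw [Finset.sub_subset_iff]
    intro a ha b hb
    rw [mem_Aset] at ha hb
    rcases ha with ⟨i,hi0,hi1,rfl⟩|⟨i,hi0,hi1,rfl⟩|⟨j,hj1,hj2,rfl⟩|rfl <;>
      rcases hb with ⟨i',hi0',hi1',rfl⟩|⟨i',hi0',hi1',rfl⟩|⟨j',hj1',hj2',rfl⟩|rfl
    -- X - X
    · exact D1mem (t := i - i') (by omega) (by omega) (by ring)
    -- X - Y
    · exact D5mem (t := (k+1)*n - 1 - i - i') (by linarith) (by linarith) (by ring)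
    -- X - Z
    · exact D6mem (t := i - j'*n + 1)
        (by nlinarith [mul_le_mul_of_nonneg_right hj2' hn0])
        (by nlinarith [mul_le_mul_of_nonneg_right hj1' hn0]) (by ring)
    -- X - w
    · exact D1mem (t := i - n) (by omega) (by omega) (by ring)
    -- Y - X
    · exact D4mem (t := (k+1)*n - 1 - i - i') (by linarith) (by linarith) (by ring)
    -- Y - Y
    · exact D1mem (t := i' - i) (by omega) (by omega) (by ring)
    -- Y - Z
    · exact D6mem (t := (k+1-j')*n - i)
        (by nlinarith [mul_le_mul_of_nonneg_right (by omega : (1:ℤ) ≤ k+1-j') hn0])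
        (by nlinarith [mul_le_mul_of_nonneg_right hj1' hn0]) (by ring)
    -- Y - w
    · exact D4mem (t := k*n - 1 - i) (by linarith) (by linarith) (by ring)
    -- Z - X
    · exact D6mem (t := j*n - i')
        (by nlinarith [mul_le_mul_of_nonneg_right hj1 hn0])
        (by nlinarith [mul_le_mul_of_nonneg_right hj2 hn0]) (by ring)
    -- Z - Y
    · exact D6mem (t := (j-k-1)*n + i' + 1)
        (by nlinarith [mul_le_mul_of_nonneg_right hj1 hn0])
        (by nlinarith [mul_le_mul_of_nonneg_right (by omega : j-k-1 ≤ -1) hn0]) (by ring)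
    -- Z - Z
    · rcases lt_trichotomy j j' with hlt | rfl | hgt
      · by_cases hA : j' - j ≤ 1
        · obtain hj : j' = j + 1 := by omega
          exact D1mem (t := -n) (by omega) (by omega) (by rw [hj]; ring)
        · by_cases hB : j' - j ≤ k - 2
          · exact D3mem (j := j' - j) (by omega) hB (by ring)
          · obtain hj : j' = j + (k-1) := by omega
            exact D5mem (t := (k-1)*n) (by linarith) (by linarith) (by rw [hj]; ring)
      · exact D1mem (t := 0) (by omega) (by omega) (by ring)
      · by_cases hA : j - j' ≤ 1
        · obtain hj : j = j' + 1 := by omega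
          exact D1mem (t := n) (by omega) (by omega) (by rw [hj]; ring)
        · by_cases hB : j - j' ≤ k - 2
          · exact D2mem (j := j - j') (by omega) hB (by ring)
          · obtain hj : j = j' + (k-1) := by omega
            exact D4mem (t := (k-1)*n) (by linarith) (by linarith) (by rw [hj]; ring)
    -- Z - w
    · exact D6mem (t := (j-1)*n)
        (by nlinarith [mul_le_mul_of_nonneg_right (by omega : (0:ℤ) ≤ j-1) hn0])
        (by nlinarith [mul_le_mul_of_nonneg_right (by omega : j-1 ≤ k) hn0]) (by ring)
    -- w - X
    · exact D1mem (t := n - i') (by omega) (by omega) (by ring)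
    -- w - Y
    · exact D5mem (t := k*n - 1 - i') (by linarith) (by linarith) (by ring)
    -- w - Z
    · exact D6mem (t := (1-j')*n + 1)
        (by nlinarith [mul_le_mul_of_nonneg_right (by omega : 1-k ≤ 1-j') hn0])
        (by nlinarith [mul_le_mul_of_nonneg_right (by omega : 1-j' ≤ 0) hn0]) (by ring)
    -- w - w
    · exact D1mem (t := 0) (by omega) (by omega) (by ring)
  · intro x hx
    simp only [Ddiff, mem_union, mem_image, mem_Icc] at hx
    rcases hx with ((((⟨t,⟨h1,h2⟩,rfl⟩|⟨j,⟨h1,h2⟩,rfl⟩)|⟨j,⟨h1,h2⟩,rfl⟩)|⟨t,⟨h1,h2⟩,rfl⟩)|⟨t,⟨h1,h2⟩,rfl⟩)|⟨t,⟨h1,h2⟩,rfl⟩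
    -- D1
    · by_cases hc1 : 0 ≤ t
      · by_cases hc2 : t ≤ n - 1
        · exact submem (AXmem hc1 (by omega)) (AXmem le_rfl (by omega)) (by ring)
        · have ht : t = n := by omega
          exact submem Awmem (AXmem le_rfl (by omega)) (by rw [ht]; ring)
      · by_cases hc2 : -(n-1) ≤ t
        · exact submem (AXmem le_rfl (by omega)) (AXmem (i := -t) (by omega) (by omega)) (by ring)
        · have ht : t = -n := by omega
          exact submem (AXmem le_rfl (by omega)) Awmem (by rw [ht]; ring)
    -- D2
    · exact submem (AZmem (j := j+1) (by omega) (by omega)) (AZmem (j := 1) le_rfl (by omega))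
        (by ring)
    -- D3
    · exact submem (AZmem (j := 1) le_rfl (by omega)) (AZmem (j := j+1) (by omega) (by omega))
        (by ring)
    -- D4
    · by_cases hc1 : t = (k-1)*n
      · exact submem (AZmem (j := k) (by omega) le_rfl) (AZmem (j := 1) le_rfl (by omega))
          (by rw [hc1]; ring)
      · have h1' : (k-1)*n + 1 ≤ t := Int.lt_iff_add_one_le.mp (lt_of_le_of_ne h1 (Ne.symm hc1))
        by_cases hc2 : (k+1)*n - 1 - t ≤ n - 1
        · exact submem (AYmem (i := (k+1)*n - 1 - t) (by linarith) (by linarith))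
            (AXmem (i := 0) le_rfl (by omega)) (by ring)
        · exact submem (AYmem (i := n - 1) (by omega) (by omega))
            (AXmem (i := (k+1)*n - 1 - t - (n-1)) (by linarith) (by linarith)) (by ring)
    -- D5
    · by_cases hc1 : t = (k-1)*n
      · exact submem (AZmem (j := 1) le_rfl (by omega)) (AZmem (j := k) (by omega) le_rfl)
          (by rw [hc1]; ring)
      · have h1' : (k-1)*n + 1 ≤ t := Int.lt_iff_add_one_le.mp (lt_of_le_of_ne h1 (Ne.symm hc1))
        by_cases hc2 : (k+1)*n - 1 - t ≤ n - 1
        · exact submem (AXmem (i := 0) le_rfl (by omega))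
            (AYmem (i := (k+1)*n - 1 - t) (by linarith) (by linarith)) (by ring)
        · exact submem (AXmem (i := (k+1)*n - 1 - t - (n-1)) (by linarith) (by linarith))
            (AYmem (i := n - 1) (by omega) (by omega)) (by ring)
    -- D6
    · by_cases hc : 1 ≤ t
      · obtain ⟨q, r, hq0, hqk, hr0, hrn, ht⟩ :=
          splitDiv (n := n) (K := k) (t := t - 1) (by omega) (by omega) (by linarith)
        exact submem (AZmem (j := q+1) (by omega) (by omega))
          (AXmem (i := n - 1 - r) (by omega) (by omega)) (by linarith [ht])
      · obtain ⟨q, r, hq0, hqk, hr0, hrn, ht⟩ :=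
          splitDiv (n := n) (K := k) (t := -t) (by omega) (by omega) (by linarith)
        exact submem (AXmem (i := n - 1 - r) (by omega) (by omega))
          (AZmem (j := q+1) (by omega) (by omega)) (by linarith [ht])
def Snew (n k : ℤ) : Finset ℤ := {2*(k+2)*n, (4*k+4)*n-2, (4*k+4)*n, (4*k+2)*n-1}
def Dnew (n k : ℤ) : Finset ℤ := {2*(k+1)*n, -(2*(k+1)*n), 2*k*n+1, -(2*k*n+1)}

lemma Ssum_ub {n k x : ℤ} (hn : 2 ≤ n) (hk : 3 ≤ k) (h : x ∈ Ssum n k) :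
    x ≤ (4*k+4)*n - 4 := by
  have hn0 : (0:ℤ) ≤ n := by omega
  have hkn : 3*n ≤ k*n := mul_le_mul_of_nonneg_right hk hn0
  simp only [Ssum, mem_union, mem_image, mem_Icc] at h
  rcases h with ((((⟨t,⟨h1,h2⟩,rfl⟩|⟨j,⟨h1,h2⟩,rfl⟩)|⟨t,⟨h1,h2⟩,rfl⟩)|⟨j,⟨h1,h2⟩,rfl⟩)|⟨t,⟨h1,h2⟩,rfl⟩)|⟨t,⟨h1,h2⟩,rfl⟩
  · linarith
  · nlinarith [mul_le_mul_of_nonneg_right h2 hn0]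
  · linarith
  · nlinarith [mul_le_mul_of_nonneg_right h2 hn0]
  · linarith
  · linarith

lemma Snew_a_not {n k : ℤ} (hn : 2 ≤ n) (hk : 3 ≤ k) : 2*(k+2)*n ∉ Ssum n k := by
  have hn0 : (0:ℤ) ≤ n := by omega
  have hkn : 3*n ≤ k*n := mul_le_mul_of_nonneg_right hk hn0
  intro h
  simp only [Ssum, mem_union, mem_image, mem_Icc] at h
  rcases h with ((((⟨t,⟨h1,h2⟩,h⟩|⟨j,⟨h1,h2⟩,h⟩)|⟨t,⟨h1,h2⟩,h⟩)|⟨j,⟨h1,h2⟩,h⟩)|⟨t,⟨h1,h2⟩,h⟩)|⟨t,⟨h1,h2⟩,h⟩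
  · linarith
  · nlinarith [mul_le_mul_of_nonneg_right h2 hn0]
  · linarith
  · nlinarith [mul_le_mul_of_nonneg_right h1 hn0]
  · linarith
  · obtain ⟨c,hc⟩ : ∃ c:ℤ, 2*(k+2)*n = 2*c := ⟨(k+2)*n, by ring⟩
    rw [hc] at h; omega

lemma Snew_d_not {n k : ℤ} (hn : 2 ≤ n) (hk : 3 ≤ k) : (4*k+2)*n-1 ∉ Ssum n k := by
  have hn0 : (0:ℤ) ≤ n := by omega
  have hkn : 3*n ≤ k*n := mul_le_mul_of_nonneg_right hk hn0
  intro h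
  simp only [Ssum, mem_union, mem_image, mem_Icc] at h
  obtain ⟨c,hc⟩ : ∃ c:ℤ, (4*k+2)*n = 2*c := ⟨(2*k+1)*n, by ring⟩
  rcases h with ((((⟨t,⟨h1,h2⟩,h⟩|⟨j,⟨h1,h2⟩,h⟩)|⟨t,⟨h1,h2⟩,h⟩)|⟨j,⟨h1,h2⟩,h⟩)|⟨t,⟨h1,h2⟩,h⟩)|⟨t,⟨h1,h2⟩,h⟩
  · rw [hc] at h; omega
  · obtain ⟨c',hc'⟩ : ∃ c':ℤ, 2*j*n - 2 = 2*c' := ⟨j*n-1, by ring⟩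
    rw [hc', hc] at h; omega
  · rw [hc] at h; omega
  · obtain ⟨c',hc'⟩ : ∃ c':ℤ, 2*j*n - 2 = 2*c' := ⟨j*n-1, by ring⟩
    rw [hc', hc] at h; omega
  · rw [hc] at h; omega
  · linarith

lemma Ddiff_bounds {n k x : ℤ} (hn : 2 ≤ n) (hk : 3 ≤ k) (h : x ∈ Ddiff n k) :
    -(2*(k+1)*n - 2) ≤ x ∧ x ≤ 2*(k+1)*n - 2 := by
  have hn0 : (0:ℤ) ≤ n := by omega
  have hkn : 3*n ≤ k*n := mul_le_mul_of_nonneg_right hk hn0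
  simp only [Ddiff, mem_union, mem_image, mem_Icc] at h
  rcases h with ((((⟨t,⟨h1,h2⟩,rfl⟩|⟨j,⟨h1,h2⟩,rfl⟩)|⟨j,⟨h1,h2⟩,rfl⟩)|⟨t,⟨h1,h2⟩,rfl⟩)|⟨t,⟨h1,h2⟩,rfl⟩)|⟨t,⟨h1,h2⟩,rfl⟩
  · constructor <;> linarith
  · constructor <;> nlinarith [mul_le_mul_of_nonneg_right h1 hn0,
      mul_le_mul_of_nonneg_right h2 hn0]
  · constructor <;> nlinarith [mul_le_mul_of_nonneg_right h1 hn0,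
      mul_le_mul_of_nonneg_right h2 hn0]
  · constructor <;> nlinarith [mul_le_mul_of_nonneg_right (by omega : (0:ℤ) ≤ k-1) hn0]
  · constructor <;> nlinarith [mul_le_mul_of_nonneg_right (by omega : (0:ℤ) ≤ k-1) hn0]
  · constructor <;> linarith

lemma Dnew_c_not {n k : ℤ} (hn : 2 ≤ n) (hk : 3 ≤ k) : 2*k*n+1 ∉ Ddiff n k := by
  have hn0 : (0:ℤ) ≤ n := by omega
  have hkn : 3*n ≤ k*n := mul_le_mul_of_nonneg_right hk hn0
  intro h
  simp only [Ddiff, mem_union, mem_image, mem_Icc] at h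
  obtain ⟨c,hc⟩ : ∃ c:ℤ, 2*k*n = 2*c := ⟨k*n, by ring⟩
  rcases h with ((((⟨t,⟨h1,h2⟩,h⟩|⟨j,⟨h1,h2⟩,h⟩)|⟨j,⟨h1,h2⟩,h⟩)|⟨t,⟨h1,h2⟩,h⟩)|⟨t,⟨h1,h2⟩,h⟩)|⟨t,⟨h1,h2⟩,h⟩
  · rw [hc] at h; omega
  · obtain ⟨c',hc'⟩ : ∃ c':ℤ, 2*j*n = 2*c' := ⟨j*n, by ring⟩
    rw [hc', hc] at h; omega
  · obtain ⟨c',hc'⟩ : ∃ c':ℤ, -(2*j*n) = 2*c' := ⟨-(j*n), by ring⟩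
    rw [hc', hc] at h; omega
  · rw [hc] at h; omega
  · rw [hc] at h; omega
  · linarith

lemma Dnew_d_not {n k : ℤ} (hn : 2 ≤ n) (hk : 3 ≤ k) : -(2*k*n+1) ∉ Ddiff n k := by
  have hn0 : (0:ℤ) ≤ n := by omega
  have hkn : 3*n ≤ k*n := mul_le_mul_of_nonneg_right hk hn0
  intro h
  simp only [Ddiff, mem_union, mem_image, mem_Icc] at h
  obtain ⟨c,hc⟩ : ∃ c:ℤ, 2*k*n = 2*c := ⟨k*n, by ring⟩
  rcases h with ((((⟨t,⟨h1,h2⟩,h⟩|⟨j,⟨h1,h2⟩,h⟩)|⟨j,⟨h1,h2⟩,h⟩)|⟨t,⟨h1,h2⟩,h⟩)|⟨t,⟨h1,h2⟩,h⟩)|⟨t,⟨h1,h2⟩,h⟩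
  · rw [hc] at h; omega
  · obtain ⟨c',hc'⟩ : ∃ c':ℤ, 2*j*n = 2*c' := ⟨j*n, by ring⟩
    rw [hc', hc] at h; omega
  · obtain ⟨c',hc'⟩ : ∃ c':ℤ, -(2*j*n) = 2*c' := ⟨-(j*n), by ring⟩
    rw [hc', hc] at h; omega
  · rw [hc] at h; omega
  · rw [hc] at h; omega
  · linarith
lemma Aset'_add {n k : ℤ} (hn : 2 ≤ n) (hk : 3 ≤ k) :
    (Aset n k ∪ {2*(k+1)*n}) + (Aset n k ∪ {2*(k+1)*n}) = Ssum n k ∪ Snew n k := by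
  have hn0 : (0:ℤ) ≤ n := by omega
  have hkn : 3*n ≤ k*n := mul_le_mul_of_nonneg_right hk hn0
  have key : ∀ a ∈ Aset n k, a + 2*(k+1)*n ∈ Ssum n k ∪ Snew n k := by
    intro a ha
    rw [mem_Aset] at ha
    rcases ha with ⟨i,hi0,hi1,rfl⟩|⟨i,hi0,hi1,rfl⟩|⟨j,hj1,hj2,rfl⟩|rfl
    · exact mem_union_left _ (S3mem (t := (k+1)*n + i) (by linarith) (by linarith) (by ring))
    · by_cases hi : i = 0
      · refine mem_union_right _ ?_
        simp only [Snew, mem_insert, mem_singleton]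
        right; left; rw [hi]; ring
      · exact mem_union_left _ (S5mem (t := (2*k+2)*n - 1 - i) (by linarith) (by omega)
          (by ring))
    · by_cases hj : j = k
      · refine mem_union_right _ ?_
        simp only [Snew, mem_insert, mem_singleton]
        right; right; right; rw [hj]; ring
      · exact mem_union_left _ (S6mem (t := (k+1+j)*n) (by nlinarith)
          (by nlinarith [mul_le_mul_of_nonneg_right (by omega : j ≤ k - 1) hn0]) (by ring))
    · refine mem_union_right _ ?_
      simp only [Snew, mem_insert, mem_singleton]
      left; ring
  apply Finset.Subset.antisymm
  · rw [Finset.add_subset_iff]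
    intro a ha b hb
    simp only [mem_union, mem_singleton] at ha hb
    rcases ha with ha | rfl <;> rcases hb with hb | rfl
    · have h := Finset.add_mem_add ha hb
      rw [Aset_add hn hk] at h
      exact mem_union_left _ h
    · exact key a ha
    · rw [add_comm]; exact key b hb
    · refine mem_union_right _ ?_
      simp only [Snew, mem_insert, mem_singleton]
      right; right; left; ring
  · apply Finset.union_subset
    · rw [← Aset_add hn hk]
      exact Finset.add_subset_add Finset.subset_union_left Finset.subset_union_left
    · intro x hx
      simp only [Snew, mem_insert, mem_singleton] at hx
      have he : (2*(k+1)*n : ℤ) ∈ Aset n k ∪ {2*(k+1)*n} :=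
        mem_union_right _ (mem_singleton_self _)
      rcases hx with rfl | rfl | rfl | rfl
      · exact addmem he (mem_union_left _ Awmem) (by ring)
      · exact addmem (mem_union_left _ (AYmem (i := 0) le_rfl (by omega))) he (by ring)
      · exact addmem he he (by ring)
      · exact addmem (mem_union_left _ (AZmem (j := k) (by omega) le_rfl)) he (by ring)

lemma Aset'_sub {n k : ℤ} (hn : 2 ≤ n) (hk : 3 ≤ k) :
    (Aset n k ∪ {2*(k+1)*n}) - (Aset n k ∪ {2*(k+1)*n}) = Ddiff n k ∪ Dnew n k := by
  have hn0 : (0:ℤ) ≤ n := by omega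
  have hkn : 3*n ≤ k*n := mul_le_mul_of_nonneg_right hk hn0
  apply Finset.Subset.antisymm
  · rw [Finset.sub_subset_iff]
    intro a ha b hb
    simp only [mem_union, mem_singleton] at ha hb
    rcases ha with ha | rfl <;> rcases hb with hb | rfl
    · have h := Finset.sub_mem_sub ha hb
      rw [Aset_sub hn hk] at h
      exact mem_union_left _ h
    · -- a ∈ Aset, b = e
      rw [mem_Aset] at ha
      rcases ha with ⟨i,hi0,hi1,rfl⟩|⟨i,hi0,hi1,rfl⟩|⟨j,hj1,hj2,rfl⟩|rfl
      · by_cases hi : i = 0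
        · refine mem_union_right _ ?_
          simp only [Dnew, mem_insert, mem_singleton]
          right; left; rw [hi]; ring
        · exact mem_union_left _ (D5mem (t := (k+1)*n - i) (by linarith) (by omega) (by ring))
      · exact mem_union_left _ (D1mem (t := -(i+1)) (by omega) (by omega) (by ring))
      · by_cases hj : j = 1
        · refine mem_union_right _ ?_
          simp only [Dnew, mem_insert, mem_singleton]
          right; right; right; rw [hj]; ring
        · exact mem_union_left _ (D6mem (t := (j-k-1)*n)
            (by nlinarith [mul_le_mul_of_nonneg_right (by omega : (1:ℤ) ≤ j-1) hn0])
            (by nlinarith [mul_le_mul_of_nonneg_right (by omega : j-k-1 ≤ -1) hn0]) (by ring))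
      · exact mem_union_left _ (D5mem (t := k*n) (by linarith) (by linarith) (by ring))
    · -- a = e, b ∈ Aset
      rw [mem_Aset] at hb
      rcases hb with ⟨i,hi0,hi1,rfl⟩|⟨i,hi0,hi1,rfl⟩|⟨j,hj1,hj2,rfl⟩|rfl
      · by_cases hi : i = 0
        · refine mem_union_right _ ?_
          simp only [Dnew, mem_insert, mem_singleton]
          left; rw [hi]; ring
        · exact mem_union_left _ (D4mem (t := (k+1)*n - i) (by linarith) (by omega) (by ring))
      · exact mem_union_left _ (D1mem (t := i+1) (by omega) (by omega) (by ring))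
      · by_cases hj : j = 1
        · refine mem_union_right _ ?_
          simp only [Dnew, mem_insert, mem_singleton]
          right; right; left; rw [hj]; ring
        · exact mem_union_left _ (D6mem (t := (k+1-j)*n + 1)
            (by nlinarith [mul_le_mul_of_nonneg_right (by omega : (1:ℤ) ≤ k+1-j) hn0])
            (by nlinarith [mul_le_mul_of_nonneg_right (by omega : k+1-j ≤ k-1) hn0]) (by ring))
      · exact mem_union_left _ (D4mem (t := k*n) (by linarith) (by linarith) (by ring))
    · exact mem_union_left _ (D1mem (t := 0) (by omega) (by omega) (by ring))
  · apply Finset.union_subset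
    · rw [← Aset_sub hn hk]
      exact Finset.sub_subset_sub Finset.subset_union_left Finset.subset_union_left
    · intro x hx
      simp only [Dnew, mem_insert, mem_singleton] at hx
      have he : (2*(k+1)*n : ℤ) ∈ Aset n k ∪ {2*(k+1)*n} :=
        mem_union_right _ (mem_singleton_self _)
      rcases hx with rfl | rfl | rfl | rfl
      · exact submem he (mem_union_left _ (AXmem (i := 0) le_rfl (by omega))) (by ring)
      · exact submem (mem_union_left _ (AXmem (i := 0) le_rfl (by omega))) he (by ring)
      · exact submem he (mem_union_left _ (AZmem (j := 1) le_rfl (by omega))) (by ring)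
      · exact submem (mem_union_left _ (AZmem (j := 1) le_rfl (by omega))) he (by ring)
lemma card_Ssum' {n k : ℤ} (hn : 2 ≤ n) (hk : 3 ≤ k) :
    (((Ssum n k ∪ Snew n k)).card : ℤ) = 2*k*n + 2*k + 6*n := by
  have hn0 : (0:ℤ) ≤ n := by omega
  have hkn : 3*n ≤ k*n := mul_le_mul_of_nonneg_right hk hn0
  have hdisj : Disjoint (Ssum n k) (Snew n k) := by
    rw [Finset.disjoint_right]
    intro x hx
    simp only [Snew, mem_insert, mem_singleton] at hx
    rcases hx with rfl | rfl | rfl | rfl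
    · exact Snew_a_not hn hk
    · intro h; have := Ssum_ub hn hk h; linarith
    · intro h; have := Ssum_ub hn hk h; linarith
    · exact Snew_d_not hn hk
  have hc4 : (Snew n k).card = 4 := by
    rw [Snew]
    rw [Finset.card_insert_of_notMem (by
        simp only [mem_insert, mem_singleton]
        push_neg
        refine ⟨?_, ?_, ?_⟩ <;> intro h <;> nlinarith),
      Finset.card_insert_of_notMem (by
        simp only [mem_insert, mem_singleton]
        push_neg
        refine ⟨?_, ?_⟩ <;> intro h <;> nlinarith),
      Finset.card_insert_of_notMem (by
        simp only [mem_singleton]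
        intro h; nlinarith),
      Finset.card_singleton]
  rw [card_union_of_disjoint hdisj, hc4]
  push_cast
  rw [card_Ssum hn hk]
  ring

lemma card_Ddiff' {n k : ℤ} (hn : 2 ≤ n) (hk : 3 ≤ k) :
    (((Ddiff n k ∪ Dnew n k)).card : ℤ) = 2*k*n + 2*k + 6*n - 1 := by
  have hn0 : (0:ℤ) ≤ n := by omega
  have hkn : 3*n ≤ k*n := mul_le_mul_of_nonneg_right hk hn0
  have hdisj : Disjoint (Ddiff n k) (Dnew n k) := by
    rw [Finset.disjoint_right]
    intro x hx
    simp only [Dnew, mem_insert, mem_singleton] at hx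
    rcases hx with rfl | rfl | rfl | rfl
    · intro h; have := Ddiff_bounds hn hk h; nlinarith [this.2]
    · intro h; have := Ddiff_bounds hn hk h; nlinarith [this.1]
    · exact Dnew_c_not hn hk
    · exact Dnew_d_not hn hk
  have hc4 : (Dnew n k).card = 4 := by
    rw [Dnew]
    rw [Finset.card_insert_of_notMem (by
        simp only [mem_insert, mem_singleton]
        push_neg
        refine ⟨?_, ?_, ?_⟩ <;> intro h <;> nlinarith),
      Finset.card_insert_of_notMem (by
        simp only [mem_insert, mem_singleton]
        push_neg
        refine ⟨?_, ?_⟩ <;> intro h <;> nlinarith),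
      Finset.card_insert_of_notMem (by
        simp only [mem_singleton]
        intro h; nlinarith),
      Finset.card_singleton]
  rw [card_union_of_disjoint hdisj, hc4]
  push_cast
  rw [card_Ddiff hn hk]
  ring

/-- Theorem 5: for `n ≥ 2` and `k ≥ 3`, both `A* = B ∪ {2n}` and
`A = A* ∪ {m+2}` are MSTD sets, with
`|A*+A*| − |A*−A*| = |A+A| − |A−A| = 1`. -/
theorem thm5 (n k : ℤ) (hn : 2 ≤ n) (hk : 3 ≤ k)
    (X Y Z B Astar A : Finset ℤ) (m : ℤ)
    (hX : X = (Finset.Ico 0 n).image (fun j => 2 * j))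
    (hm : m = 2 * (k + 1) * n - 2)
    (hY : Y = X.image (fun x => m - x))
    (hZ : Z = (Finset.Icc 1 k).image (fun j => 2 * j * n - 1))
    (hB : B = X ∪ Y ∪ Z)
    (hAstar : Astar = B ∪ {2 * n})
    (hA : A = Astar ∪ {m + 2}) :
    (Astar - Astar).card < (Astar + Astar).card ∧
    (A - A).card < (A + A).card ∧
    (Astar + Astar).card = (Astar - Astar).card + 1 ∧
    (A + A).card = (A - A).card + 1 := by
  have hAs : Astar = Aset n k := by
    subst hX hm hY hZ hB hAstar
    rw [Finset.image_image, Aset]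
    rfl
  have hAe : A = Aset n k ∪ {2*(k+1)*n} := by
    rw [hA, hAs, hm]
    norm_num
  rw [hAs, hAe, Aset_add hn hk, Aset_sub hn hk, Aset'_add hn hk, Aset'_sub hn hk]
  have c1 := card_Ssum hn hk
  have c2 := card_Ddiff hn hk
  have c3 := card_Ssum' hn hk
  have c4 := card_Ddiff' hn hk
  have h1 : ((Ssum n k).card : ℤ) = ((Ddiff n k).card : ℤ) + 1 := by rw [c1, c2]; ring
  have h2 : (((Ssum n k ∪ Snew n k)).card : ℤ) = (((Ddiff n k ∪ Dnew n k)).card : ℤ) + 1 := by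
    rw [c3, c4]; ring
  refine ⟨?_, ?_, ?_, ?_⟩ <;> omega
end

section
/- Let A be a finite normalised subset of ℤ with largest element m, let n > 0 be an integer, and let A' ⊆ ℤ/nℤ be the reduction of A modulo n. Suppose A is reducible modulo n. Set f(n,A) := |A'+A'| − |A'−A'| (sumsets and difference sets of A' computed in ℤ/nℤ) and B := A ∪ (A + n). Then B is a normalised finite subset of ℤ and |B+B| − |B−B| = (|A+A| − |A−A|) + 2·f(n,A). -/
open Finset Pointwise

/-- The reduction of `A ⊆ ℤ` modulo `n`: the image of `A ∩ [0,n)` in `ℤ/nℤ`. -/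
noncomputable def reductionMod (A : Finset ℤ) (n : ℕ) : Finset (ZMod n) :=
  (A ∩ Finset.Ico 0 (n : ℤ)).image (fun x : ℤ => (x : ZMod n))

/-- `A` is reducible modulo `n` if `A = {x ∈ ℤ : 0 ≤ x ≤ max A, (x mod n) ∈ A'}`,
where `A'` is the reduction of `A` modulo `n`. -/
def ReducibleMod (A : Finset ℤ) (n : ℕ) : Prop :=
  ∀ x : ℤ, x ∈ A ↔ 0 ≤ x ∧ (∃ a ∈ A, x ≤ a) ∧ (x : ZMod n) ∈ reductionMod A n

lemma castShift (n : ℕ) (x : ℤ) : ((x + n : ℤ) : ZMod n) = (x : ZMod n) := by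
  push_cast; simp

lemma castDvd (n : ℕ) (x y : ℤ) (h : (x : ZMod n) = (y : ZMod n)) : (n : ℤ) ∣ y - x :=
  Int.ModEq.dvd ((ZMod.intCast_eq_intCast_iff x y n).mp h)

lemma keyCount (n : ℕ) (hn : 0 < n) (S T : Finset ℤ)
    (hT : ∀ x, x ∈ T ↔ x ∈ S ∨ x - n ∈ S ∨ x - 2*n ∈ S)
    (hcl : ∀ x ∈ S, ∀ y ∈ S, (n:ℤ) ∣ y - x → x < y → x + n ∈ S) :
    T.card = S.card + 2 * (S.image (fun x : ℤ => (x : ZMod n))).card := by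
  have hST : S ⊆ T := fun x hx => (hT x).mpr (Or.inl hx)
  have himg : T.image (fun x : ℤ => (x : ZMod n)) = S.image (fun x : ℤ => (x : ZMod n)) := by
    apply subset_antisymm
    · intro r hr
      simp only [mem_image] at hr ⊢
      obtain ⟨x, hx, rfl⟩ := hr
      rcases (hT x).mp hx with h | h | h
      · exact ⟨x, h, rfl⟩
      · exact ⟨x - n, h, by push_cast; simp⟩
      · exact ⟨x - 2*n, h, by push_cast; simp⟩
    · exact image_subset_image hST
  have hfib : ∀ r ∈ S.image (fun x : ℤ => (x : ZMod n)),
      (T.filter (fun x : ℤ => (x : ZMod n) = r)).card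
        = (S.filter (fun x : ℤ => (x : ZMod n) = r)).card + 2 := by
    intro r hr
    have hFne : (S.filter (fun x : ℤ => (x : ZMod n) = r)).Nonempty := by
      obtain ⟨x, hx, rfl⟩ := mem_image.mp hr
      exact ⟨x, mem_filter.mpr ⟨hx, rfl⟩⟩
    set F := S.filter (fun x : ℤ => (x : ZMod n) = r) with hF
    set h := F.max' hFne with hh
    have hhF : h ∈ F := F.max'_mem hFne
    have hhS : h ∈ S := (mem_filter.mp hhF).1
    have hhr : ((h : ℤ) : ZMod n) = r := (mem_filter.mp hhF).2
    have hle : ∀ x ∈ F, x ≤ h := fun x hx => F.le_max' x hx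
    have hmemF : ∀ x : ℤ, x ∈ S → ((x:ℤ) : ZMod n) = r → x ∈ F :=
      fun (x : ℤ) hx hxr => mem_filter.mpr ⟨hx, hxr⟩
    have step : ∀ x ∈ F, x < h → x + n ∈ F := by
      intro x hx hxh
      have hxS := (mem_filter.mp hx).1
      have hxr := (mem_filter.mp hx).2
      have hdvd : (n:ℤ) ∣ h - x := castDvd n x h (hxr.trans hhr.symm)
      exact hmemF _ (hcl x hxS h hhS hdvd hxh) (by rw [castShift]; exact hxr)
    have hG : T.filter (fun x : ℤ => (x : ZMod n) = r) = insert (h + n) (insert (h + 2*n) F) := by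
      ext x
      simp only [mem_filter, mem_insert]
      constructor
      · rintro ⟨hxT, hxr⟩
        rcases (hT x).mp hxT with hs | hs | hs
        · exact Or.inr (Or.inr (hmemF _ hs hxr))
        · have hF1 : x - n ∈ F := hmemF _ hs (by push_cast; simp [hxr])
          rcases lt_or_eq_of_le (hle _ hF1) with hlt | heq
          · have hstep := step _ hF1 hlt
            exact Or.inr (Or.inr (by simpa using hstep))
          · left; omega
        · have hF2 : x - 2*n ∈ F := hmemF _ hs (by push_cast; simp [hxr])
          rcases lt_or_eq_of_le (hle _ hF2) with hlt | heq
          · have h1 : x - n ∈ F := by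
              have hstep := step _ hF2 hlt
              have hxe : x - 2*(n:ℤ) + n = x - n := by ring
              rwa [hxe] at hstep
            rcases lt_or_eq_of_le (hle _ h1) with hlt1 | heq1
            · have hstep := step _ h1 hlt1
              exact Or.inr (Or.inr (by simpa using hstep))
            · left; omega
          · right; left; omega
      · rintro (rfl | rfl | hx)
        · exact ⟨(hT _).mpr (Or.inr (Or.inl (by simpa using hhS))),
            by rw [castShift]; exact hhr⟩
        · refine ⟨(hT _).mpr (Or.inr (Or.inr (by simpa using hhS))), ?_⟩
          push_cast; simp [hhr.symm]
        · exact ⟨hST (mem_filter.mp hx).1 |> fun hxx => hxx, (mem_filter.mp hx).2⟩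
    rw [hG]
    have h1 : h + 2*(n:ℤ) ∉ F := fun hc => by have := hle _ hc; omega
    have h2 : h + (n:ℤ) ∉ insert (h + 2*(n:ℤ)) F := by
      simp only [mem_insert]
      push_neg
      exact ⟨by omega, fun hc => by have := hle _ hc; omega⟩
    rw [card_insert_of_notMem h2, card_insert_of_notMem h1]
  calc T.card = ∑ r ∈ T.image (fun x : ℤ => (x : ZMod n)),
        (T.filter (fun x : ℤ => (x : ZMod n) = r)).card :=
        Finset.card_eq_sum_card_image _ T
    _ = ∑ r ∈ S.image (fun x : ℤ => (x : ZMod n)),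
        (T.filter (fun x : ℤ => (x : ZMod n) = r)).card := by rw [himg]
    _ = ∑ r ∈ S.image (fun x : ℤ => (x : ZMod n)),
        ((S.filter (fun x : ℤ => (x : ZMod n) = r)).card + 2) := Finset.sum_congr rfl hfib
    _ = (∑ r ∈ S.image (fun x : ℤ => (x : ZMod n)),
        (S.filter (fun x : ℤ => (x : ZMod n) = r)).card)
        + (S.image (fun x : ℤ => (x : ZMod n))).card * 2 := by
        rw [Finset.sum_add_distrib, Finset.sum_const, smul_eq_mul]
    _ = S.card + 2 * (S.image (fun x : ℤ => (x : ZMod n))).card := by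
        rw [← Finset.card_eq_sum_card_image]; ring

/-- Lemma 7: if the normalised set `A` is reducible modulo `n` with reduction
`A'`, then `B = A ∪ (A + n)` is normalised and
`|B+B| − |B−B| = (|A+A| − |A−A|) + 2·(|A'+A'| − |A'−A'|)`. -/
theorem lemma7 (A : Finset ℤ) (hA : IsNormalised A) (n : ℕ) (hn : 0 < n)
    (hred : ReducibleMod A n)
    (B : Finset ℤ) (hB : B = A ∪ A.image (fun a => a + n)) :
    IsNormalised B ∧
    ((B + B).card : ℤ) - ((B - B).card : ℤ) =
      (((A + A).card : ℤ) - ((A - A).card : ℤ)) +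
        2 * (((reductionMod A n + reductionMod A n).card : ℤ) -
             ((reductionMod A n - reductionMod A n).card : ℤ)) := by
  obtain ⟨h0, hpos, hgcd⟩ := hA
  have hAne : A.Nonempty := ⟨0, h0⟩
  set M := A.max' hAne with hM
  have hMmem : M ∈ A := A.max'_mem hAne
  have hMle : ∀ a ∈ A, a ≤ M := fun a ha => A.le_max' a ha
  -- membership characterization
  have memA : ∀ x : ℤ, x ∈ A ↔ 0 ≤ x ∧ x ≤ M ∧ (x : ZMod n) ∈ reductionMod A n := by
    intro x
    constructor
    · intro hx
      obtain ⟨h1, ⟨a, ha, hxa⟩, h3⟩ := (hred x).mp hx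
      exact ⟨h1, le_trans hxa (hMle a ha), h3⟩
    · rintro ⟨h1, h2, h3⟩
      exact (hred x).mpr ⟨h1, ⟨M, hMmem, h2⟩, h3⟩
  have hApos : ∀ a ∈ A, 0 ≤ a := hpos
  have shiftUp : ∀ a ∈ A, a + n ≤ M → a + n ∈ A := by
    intro a ha hle
    have := (memA a).mp ha
    exact (memA (a + n)).mpr ⟨by omega, hle, by rw [castShift]; exact this.2.2⟩
  have shiftDown : ∀ a ∈ A, (n:ℤ) ≤ a → a - n ∈ A := by
    intro a ha hle
    obtain ⟨h1, h2, h3⟩ := (memA a).mp ha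
    refine (memA (a - n)).mpr ⟨by omega, by omega, ?_⟩
    have : ((a - n + n : ℤ) : ZMod n) = ((a - n : ℤ) : ZMod n) := castShift n (a - n)
    rw [show (a - (n:ℤ) + n) = a by ring] at this
    rwa [← this]
  -- multiples of n in (0, 2n) equal n
  have hmult : ∀ d : ℤ, (n:ℤ) ∣ d → 0 < d → d < 2*n → d = n := by
    intro d hdvd hd1 hd2
    obtain ⟨k, rfl⟩ := hdvd
    have hnpos : (0:ℤ) < n := by exact_mod_cast hn
    have hk1 : 0 < k := by nlinarith
    have hk2 : k < 2 := by nlinarith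
    have : k = 1 := by omega
    rw [this, mul_one]
  -- closure for A + A
  have closS : ∀ x ∈ A + A, ∀ y ∈ A + A, (n:ℤ) ∣ y - x → x < y → x + n ∈ A + A := by
    intro x hx y hy hdvd hlt
    obtain ⟨a, ha, b, hb, rfl⟩ := Finset.mem_add.mp hx
    obtain ⟨c, hc, d, hd, rfl⟩ := Finset.mem_add.mp hy
    by_cases hA1 : a + n ≤ M
    · exact Finset.mem_add.mpr ⟨a + n, shiftUp a ha hA1, b, hb, by ring⟩
    by_cases hA2 : b + n ≤ M
    · exact Finset.mem_add.mpr ⟨a, ha, b + n, shiftUp b hb hA2, by ring⟩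
    · have hcM := hMle c hc
      have hdM := hMle d hd
      have haM := hMle a ha
      have hbM := hMle b hb
      have : c + d - (a + b) = n := hmult _ hdvd (by omega) (by omega)
      have : a + b + n = c + d := by omega
      rw [this]; exact hy
  -- closure for A - A
  have closD : ∀ x ∈ A - A, ∀ y ∈ A - A, (n:ℤ) ∣ y - x → x < y → x + n ∈ A - A := by
    intro x hx y hy hdvd hlt
    obtain ⟨a, ha, b, hb, rfl⟩ := Finset.mem_sub.mp hx
    obtain ⟨c, hc, d, hd, rfl⟩ := Finset.mem_sub.mp hy
    by_cases hA1 : a + n ≤ M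
    · exact Finset.mem_sub.mpr ⟨a + n, shiftUp a ha hA1, b, hb, by ring⟩
    by_cases hA2 : (n:ℤ) ≤ b
    · exact Finset.mem_sub.mpr ⟨a, ha, b - n, shiftDown b hb hA2, by ring⟩
    · have hcM := hMle c hc
      have hd0 := hApos d hd
      have haM := hMle a ha
      have hb0 := hApos b hb
      have : c - d - (a - b) = n := hmult _ hdvd (by omega) (by omega)
      have : a - b + n = c - d := by omega
      rw [this]; exact hy
  -- hT for sums
  have hTS : ∀ x : ℤ, x ∈ B + B ↔ x ∈ A + A ∨ x - n ∈ A + A ∨ x - 2*n ∈ A + A := by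
    intro x
    constructor
    · intro hx
      obtain ⟨b1, hb1, b2, hb2, rfl⟩ := Finset.mem_add.mp hx
      rw [hB, mem_union, mem_image] at hb1 hb2
      rcases hb1 with hb1 | ⟨a1, ha1, rfl⟩ <;> rcases hb2 with hb2 | ⟨a2, ha2, rfl⟩
      · exact Or.inl (Finset.add_mem_add hb1 hb2)
      · exact Or.inr (Or.inl (Finset.mem_add.mpr ⟨b1, hb1, a2, ha2, by ring⟩))
      · exact Or.inr (Or.inl (Finset.mem_add.mpr ⟨a1, ha1, b2, hb2, by ring⟩))
      · exact Or.inr (Or.inr (Finset.mem_add.mpr ⟨a1, ha1, a2, ha2, by ring⟩))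
    · have hAB : A ⊆ B := hB ▸ subset_union_left
      have hAB2 : ∀ a ∈ A, a + (n:ℤ) ∈ B := by
        intro a ha; rw [hB, mem_union, mem_image]; exact Or.inr ⟨a, ha, rfl⟩
      rintro (hx | hx | hx)
      · obtain ⟨a, ha, b, hb, rfl⟩ := Finset.mem_add.mp hx
        exact Finset.add_mem_add (hAB ha) (hAB hb)
      · obtain ⟨a, ha, b, hb, hab⟩ := Finset.mem_add.mp hx
        exact Finset.mem_add.mpr ⟨a + n, hAB2 a ha, b, hAB hb, by omega⟩
      · obtain ⟨a, ha, b, hb, hab⟩ := Finset.mem_add.mp hx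
        exact Finset.mem_add.mpr ⟨a + n, hAB2 a ha, b + n, hAB2 b hb, by omega⟩
  -- hT for differences, via translate
  have hTD : ∀ x : ℤ, x ∈ (B - B).image (fun y => y + (n:ℤ)) ↔
      x ∈ A - A ∨ x - n ∈ A - A ∨ x - 2*n ∈ A - A := by
    intro x
    rw [mem_image]
    constructor
    · rintro ⟨y, hy, rfl⟩
      obtain ⟨b1, hb1, b2, hb2, rfl⟩ := Finset.mem_sub.mp hy
      rw [hB, mem_union, mem_image] at hb1 hb2
      rcases hb1 with hb1 | ⟨a1, ha1, rfl⟩ <;> rcases hb2 with hb2 | ⟨a2, ha2, rfl⟩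
      · exact Or.inr (Or.inl (Finset.mem_sub.mpr ⟨b1, hb1, b2, hb2, by ring⟩))
      · exact Or.inl (Finset.mem_sub.mpr ⟨b1, hb1, a2, ha2, by ring⟩)
      · exact Or.inr (Or.inr (Finset.mem_sub.mpr ⟨a1, ha1, b2, hb2, by ring⟩))
      · exact Or.inr (Or.inl (Finset.mem_sub.mpr ⟨a1, ha1, a2, ha2, by ring⟩))
    · have hAB : A ⊆ B := hB ▸ subset_union_left
      have hAB2 : ∀ a ∈ A, a + (n:ℤ) ∈ B := by
        intro a ha; rw [hB, mem_union, mem_image]; exact Or.inr ⟨a, ha, rfl⟩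
      rintro (hx | hx | hx)
      · obtain ⟨a, ha, b, hb, hab⟩ := Finset.mem_sub.mp hx
        exact ⟨x - n, Finset.mem_sub.mpr ⟨a, hAB ha, b + n, hAB2 b hb, by omega⟩, by ring⟩
      · obtain ⟨a, ha, b, hb, hab⟩ := Finset.mem_sub.mp hx
        exact ⟨x - n, Finset.mem_sub.mpr ⟨a, hAB ha, b, hAB hb, by omega⟩, by ring⟩
      · obtain ⟨a, ha, b, hb, hab⟩ := Finset.mem_sub.mp hx
        exact ⟨x - n, Finset.mem_sub.mpr ⟨a + n, hAB2 a ha, b, hAB hb, by omega⟩, by ring⟩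
  -- image of A mod n is the reduction
  have imageA : A.image (fun x : ℤ => (x : ZMod n)) = reductionMod A n := by
    apply subset_antisymm
    · intro r hr
      obtain ⟨x, hx, rfl⟩ := mem_image.mp hr
      exact ((hred x).mp hx).2.2
    · intro r hr
      obtain ⟨x, hx, rfl⟩ := mem_image.mp hr
      exact mem_image.mpr ⟨x, (mem_inter.mp hx).1, rfl⟩
  -- images of sumset/difference set
  have imageS : (A + A).image (fun x : ℤ => (x : ZMod n))
      = reductionMod A n + reductionMod A n := by
    rw [← imageA]
    apply subset_antisymm
    · intro r hr
      obtain ⟨x, hx, rfl⟩ := mem_image.mp hr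
      obtain ⟨a, ha, b, hb, rfl⟩ := Finset.mem_add.mp hx
      exact Finset.mem_add.mpr ⟨(a : ZMod n), mem_image.mpr ⟨a, ha, rfl⟩,
        (b : ZMod n), mem_image.mpr ⟨b, hb, rfl⟩, by push_cast; ring⟩
    · intro r hr
      obtain ⟨u, hu, v, hv, rfl⟩ := Finset.mem_add.mp hr
      obtain ⟨a, ha, rfl⟩ := mem_image.mp hu
      obtain ⟨b, hb, rfl⟩ := mem_image.mp hv
      exact mem_image.mpr ⟨a + b, Finset.add_mem_add ha hb, by push_cast; ring⟩
  have imageD : (A - A).image (fun x : ℤ => (x : ZMod n))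
      = reductionMod A n - reductionMod A n := by
    rw [← imageA]
    apply subset_antisymm
    · intro r hr
      obtain ⟨x, hx, rfl⟩ := mem_image.mp hr
      obtain ⟨a, ha, b, hb, rfl⟩ := Finset.mem_sub.mp hx
      exact Finset.mem_sub.mpr ⟨(a : ZMod n), mem_image.mpr ⟨a, ha, rfl⟩,
        (b : ZMod n), mem_image.mpr ⟨b, hb, rfl⟩, by push_cast; ring⟩
    · intro r hr
      obtain ⟨u, hu, v, hv, rfl⟩ := Finset.mem_sub.mp hr
      obtain ⟨a, ha, rfl⟩ := mem_image.mp hu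
      obtain ⟨b, hb, rfl⟩ := mem_image.mp hv
      exact mem_image.mpr ⟨a - b, Finset.sub_mem_sub ha hb, by push_cast; ring⟩
  -- counting
  have key1 : (B + B).card = (A + A).card + 2 * (reductionMod A n + reductionMod A n).card := by
    rw [← imageS]; exact keyCount n hn _ _ hTS closS
  have key2 : (B - B).card = (A - A).card + 2 * (reductionMod A n - reductionMod A n).card := by
    have hinj : Function.Injective (fun y : ℤ => y + (n:ℤ)) := fun a b h => by
      simpa using h
    have hcard : ((B - B).image (fun y => y + (n:ℤ))).card = (B - B).card :=
      Finset.card_image_of_injective _ hinj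
    rw [← hcard, ← imageD]
    exact keyCount n hn _ _ hTD closD
  -- normalisation of B
  have hBnorm : IsNormalised B := by
    refine ⟨hB ▸ mem_union_left _ h0, ?_, ?_⟩
    · intro b hb
      rw [hB, mem_union, mem_image] at hb
      rcases hb with hb | ⟨a, ha, rfl⟩
      · exact hpos b hb
      · have := hpos a ha; positivity
    · have hdvd : B.gcd id ∣ A.gcd id := by
        apply Finset.dvd_gcd
        intro a ha
        exact Finset.gcd_dvd (hB ▸ mem_union_left _ ha)
      rw [hgcd] at hdvd
      have hnn : 0 ≤ B.gcd id :=
        Int.nonneg_of_normalize_eq_self (Finset.normalize_gcd)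
      rcases Int.isUnit_iff.mp (isUnit_of_dvd_one hdvd) with h | h
      · exact h
      · omega
  refine ⟨hBnorm, ?_⟩
  rw [key1, key2]
  push_cast
  ring
end

section
/- Let A be a finite nonempty subset of ℤ. Then there exists M such that for every integer m ≥ M and every integer t ≥ 1, the set A_t := { Σ_{i=1}^{t} a_i·m^(i−1) : a_1,...,a_t ∈ A } satisfies |A_t + A_t| = |A+A|^t and |A_t − A_t| = |A−A|^t. -/
/-!
Evaluating a digit vector `a : Fin t → ℤ` in base `m` is additive, so `A_t ± A_t` is the image of
the digit vectors with digits in `A ± A`. If every digit of `A ± A` has absolute value at most `D`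
and `m > 2D`, two such vectors with the same value differ by a vector `c` with `|cᵢ| < m` and
`∑ cᵢ mⁱ = 0`; reducing modulo `m` kills the digits one at a time, so `c = 0`. Hence the image
has `|A ± A|^t` elements once `m > 4 ∑_{a ∈ A} |a|`.
-/

open Finset Pointwise

section AbsBound

variable {α : Type*} [AddCommGroup α] [LinearOrder α] [IsOrderedAddMonoid α] [DecidableEq α]
  {s u : Finset α} {C D : α}

lemma abs_le_add_of_mem_add (hs : ∀ x ∈ s, |x| ≤ C) (hu : ∀ y ∈ u, |y| ≤ D) :
    ∀ z ∈ s + u, |z| ≤ C + D := by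
  rintro _ hz
  obtain ⟨x, hx, y, hy, rfl⟩ := mem_add.mp hz
  exact (abs_add_le x y).trans (add_le_add (hs x hx) (hu y hy))

lemma abs_le_add_of_mem_sub (hs : ∀ x ∈ s, |x| ≤ C) (hu : ∀ y ∈ u, |y| ≤ D) :
    ∀ z ∈ s - u, |z| ≤ C + D := by
  rintro _ hz
  obtain ⟨x, hx, y, hy, rfl⟩ := mem_sub.mp hz
  exact (abs_sub x y).trans (add_le_add (hs x hx) (hu y hy))

end AbsBound

def baseExpand (t : ℕ) (m : ℤ) : (Fin t → ℤ) →+ ℤ where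
  toFun a := ∑ i, a i * m ^ (i : ℕ)
  map_zero' := by simp
  map_add' a b := by simp only [Pi.add_apply, add_mul, sum_add_distrib]

lemma baseExpand_succ (t : ℕ) (m : ℤ) (a : Fin (t + 1) → ℤ) :
    baseExpand (t + 1) m a = a 0 + m * baseExpand t m (fun i => a i.succ) := by
  simp only [baseExpand, AddMonoidHom.coe_mk, ZeroHom.coe_mk, Fin.sum_univ_succ, Fin.val_zero,
    pow_zero, mul_one, Fin.val_succ, pow_succ, mul_sum]
  congr 1
  exact sum_congr rfl fun i _ => by ring

lemma eq_zero_of_baseExpand_eq_zero {t : ℕ} {m : ℤ} {c : Fin t → ℤ} (hc : ∀ i, |c i| < m)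
    (h : baseExpand t m c = 0) : c = 0 := by
  induction t with
  | zero => exact funext fun i => i.elim0
  | succ t ih =>
    rw [baseExpand_succ] at h
    have hm : m ≠ 0 := ((abs_nonneg _).trans_lt (hc 0)).ne'
    have head : c 0 = 0 :=
      Int.eq_zero_of_abs_lt_dvd ⟨-baseExpand t m (fun i => c i.succ), by linarith⟩ (hc 0)
    have tail : (fun i : Fin t => c i.succ) = 0 := by
      refine ih (fun i : Fin t => hc i.succ) ?_
      rw [head, zero_add] at h
      exact (mul_eq_zero.mp h).resolve_left hm
    funext i
    exact Fin.cases head (fun j => congrFun tail j) i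

lemma injOn_baseExpand {t : ℕ} {m D : ℤ} {S : Finset ℤ} (hS : ∀ x ∈ S, |x| ≤ D)
    (hm : 2 * D < m) : Set.InjOn (baseExpand t m) (Fintype.piFinset fun _ : Fin t => S) := by
  intro a ha b hb hab
  rw [mem_coe, Fintype.mem_piFinset] at ha hb
  have hdiff : ∀ i, |(a - b) i| < m := fun i =>
    calc |a i - b i| ≤ |a i| + |b i| := abs_sub _ _
      _ ≤ D + D := add_le_add (hS _ (ha i)) (hS _ (hb i))
      _ < m := by linarith
  exact sub_eq_zero.mp (eq_zero_of_baseExpand_eq_zero hdiff (by rw [map_sub, hab, sub_self]))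

lemma card_image_baseExpand {t : ℕ} {m D : ℤ} {S : Finset ℤ} (hS : ∀ x ∈ S, |x| ≤ D)
    (hm : 2 * D < m) : #((Fintype.piFinset fun _ : Fin t => S).image (baseExpand t m)) = #S ^ t := by
  rw [card_image_of_injOn (injOn_baseExpand hS hm), Fintype.card_piFinset_const]

lemma image_baseExpand_add (t : ℕ) (m : ℤ) (A B : Finset ℤ) :
    (Fintype.piFinset fun _ : Fin t => A).image (baseExpand t m) +
        (Fintype.piFinset fun _ => B).image (baseExpand t m) =
      (Fintype.piFinset fun _ => A + B).image (baseExpand t m) := by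
  rw [Fintype.piFinset_add, image_add]

lemma image_baseExpand_sub (t : ℕ) (m : ℤ) (A B : Finset ℤ) :
    (Fintype.piFinset fun _ : Fin t => A).image (baseExpand t m) -
        (Fintype.piFinset fun _ => B).image (baseExpand t m) =
      (Fintype.piFinset fun _ => A - B).image (baseExpand t m) := by
  rw [Fintype.piFinset_sub]
  exact (image_image₂_distrib (map_sub _)).symm

theorem base_expansion_general (A : Finset ℤ) :
    ∃ M : ℤ, ∀ m : ℤ, M ≤ m → ∀ t : ℕ, 1 ≤ t →
      ∀ At : Finset ℤ,
        At = (Fintype.piFinset (fun _ : Fin t => A)).image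
          (fun a => ∑ i : Fin t, a i * m ^ (i : ℕ)) →
        (At + At).card = (A + A).card ^ t ∧
        (At - At).card = (A - A).card ^ t := by
  set C := ∑ x ∈ A, |x|
  have hC : ∀ x ∈ A, |x| ≤ C := fun x hx => single_le_sum (fun y _ => abs_nonneg y) hx
  refine ⟨4 * C + 1, fun m hm t _ At hAt => ?_⟩
  have hAt' : At = (Fintype.piFinset fun _ : Fin t => A).image (baseExpand t m) := hAt
  have hm' : 2 * (C + C) < m := by linarith
  rw [hAt', image_baseExpand_add, image_baseExpand_sub]
  exact ⟨card_image_baseExpand (abs_le_add_of_mem_add hC hC) hm',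
    card_image_baseExpand (abs_le_add_of_mem_sub hC hC) hm'⟩

/-- The base expansion method: for any finite nonempty `A ⊆ ℤ` there is `M`
such that for every base `m ≥ M` and every `t ≥ 1`, the set
`A_t = {∑ aᵢ m^(i−1) : aᵢ ∈ A}` satisfies `|A_t ± A_t| = |A ± A|^t`. -/
theorem base_expansion (A : Finset ℤ) (hA : A.Nonempty) :
    ∃ M : ℤ, ∀ m : ℤ, M ≤ m → ∀ t : ℕ, 1 ≤ t →
      ∀ At : Finset ℤ,
        At = (Fintype.piFinset (fun _ : Fin t => A)).image
          (fun a => ∑ i : Fin t, a i * m ^ (i : ℕ)) →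
        (At + At).card = (A + A).card ^ t ∧
        (At - At).card = (A - A).card ^ t :=
  base_expansion_general A
end

section
/- Define m_0 := −1, L_0 := ∅, and inductively m_{i+1} := 3m_i + 16 and L_{i+1} := L_i ∪ ((m_i + 1) + ({0,1,2,5} ∪ ([m_i+10, 2m_i+15] ∩ ℤ))). Then for every j ≥ 0: m_j = 7·3^j − 8, |L_j| = 7(3^j − 1)/2 + 2j, and L_j + L_j = ([0, 2m_j] ∩ ℤ) \ {2(m_t + 5) : 0 ≤ t < j}. -/
open Finset Pointwise

/-!
Induction on `j`. Suppose `L ⊆ [0, a]` and `L + L = [0, 2a] \ E` with `E ⊆ [1, a]`; then `0, a ∈ L`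
(as `0` and `2a` lie in `L + L`). The new block `B = (a+1) + ({0,1,2,5} ∪ [a+10, 2a+15])` lies in
`[a+1, 3a+16]`, so every sum involving `B` exceeds `max E`, and none equals `2a+10`. Conversely
`2a+1 = a + (a+1)`, the four small elements of `B` cover `[2a+2, 2a+9]` by pairwise sums, and the
translates of `[2a+11, 3a+16]` by `0, a+1, a+6, 2a+11, 3a+16` cover `[2a+11, 6a+32]`.
-/

namespace InductiveSets

noncomputable def block (a : ℤ) : Finset ℤ :=
  (({0, 1, 2, 5} : Finset ℤ) ∪ Icc (a + 10) (2 * a + 15)).image (fun x => (a + 1) + x)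

section Block

variable {a : ℤ} {L E : Finset ℤ}

theorem mem_block {y : ℤ} :
    y ∈ block a ↔ y = a + 1 ∨ y = a + 2 ∨ y = a + 3 ∨ y = a + 6 ∨
      (2 * a + 11 ≤ y ∧ y ≤ 3 * a + 16) := by
  simp only [block, mem_image, mem_union, mem_insert, mem_singleton, mem_Icc]
  constructor
  · rintro ⟨x, hx, rfl⟩
    omega
  · exact fun h => ⟨y - (a + 1), by omega, by ring⟩

theorem card_block (ha : -5 < a) : ((block a).card : ℤ) = a + 10 := by
  have hdisj : Disjoint ({0, 1, 2, 5} : Finset ℤ) (Icc (a + 10) (2 * a + 15)) := by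
    simp only [disjoint_left, mem_insert, mem_singleton, mem_Icc]
    omega
  rw [block, card_image_of_injective _ (add_right_injective _), card_union_of_disjoint hdisj,
    Int.card_Icc]
  simp only [Nat.cast_add, Int.toNat_of_nonneg (by omega : (0 : ℤ) ≤ 2 * a + 15 + 1 - (a + 10))]
  norm_num
  ring

theorem union_block_subset_Icc (ha : -1 ≤ a) (hL : L ⊆ Icc 0 a) :
    L ∪ block a ⊆ Icc 0 (3 * a + 16) := by
  intro y hy
  rcases mem_union.mp hy with hy | hy
  · have := mem_Icc.mp (hL hy)
    exact mem_Icc.mpr (by omega)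
  · have := mem_block.mp hy
    exact mem_Icc.mpr (by omega)

theorem card_union_block (ha : -5 < a) (hL : L ⊆ Icc 0 a) :
    ((L ∪ block a).card : ℤ) = L.card + (a + 10) := by
  have hdisj : Disjoint L (block a) := by
    refine disjoint_left.mpr fun y hyL hyB => ?_
    have := mem_Icc.mp (hL hyL)
    have := mem_block.mp hyB
    omega
  rw [card_union_of_disjoint hdisj, Nat.cast_add, card_block ha]

theorem zero_mem_and_mem_of_add_self_eq (ha : 0 ≤ a) (hL : L ⊆ Icc 0 a) (hE : E ⊆ Icc 1 a)
    (hLL : L + L = Icc 0 (2 * a) \ E) : 0 ∈ L ∧ a ∈ L := by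
  have mem_add_self : ∀ x, 0 ≤ x → x ≤ 2 * a → (x ≤ 0 ∨ a < x) → x ∈ L + L := by
    intro x hx0 hx hxE
    rw [hLL, mem_sdiff, mem_Icc]
    exact ⟨⟨hx0, hx⟩, fun h => by have := mem_Icc.mp (hE h); omega⟩
  obtain ⟨p, hp, q, hq, hpq⟩ := mem_add.mp (mem_add_self 0 le_rfl (by omega) (by omega))
  obtain ⟨p', hp', q', hq', hpq'⟩ :=
    mem_add.mp (mem_add_self (2 * a) (by omega) le_rfl (by omega))
  have := mem_Icc.mp (hL hp); have := mem_Icc.mp (hL hq)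
  have := mem_Icc.mp (hL hp'); have := mem_Icc.mp (hL hq')
  obtain rfl : p = 0 := by omega
  obtain rfl : p' = a := by omega
  exact ⟨hp, hp'⟩

theorem add_self_union_block_subset (ha : -1 ≤ a) (hL : L ⊆ Icc 0 a) (hE : E ⊆ Icc 1 a)
    (hLL : L + L = Icc 0 (2 * a) \ E) :
    (L ∪ block a) + (L ∪ block a) ⊆ Icc 0 (2 * (3 * a + 16)) \ insert (2 * (a + 5)) E := by
  intro x hx
  obtain ⟨p, hp, q, hq, rfl⟩ := mem_add.mp hx
  simp only [mem_sdiff, mem_insert, mem_Icc, not_or]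
  have not_mem_E : ∀ y, a < y → y ∉ E := fun y hy h => by have := mem_Icc.mp (hE h); omega
  have mem_union_block : ∀ y ∈ L ∪ block a, y ∈ L ∧ 0 ≤ y ∧ y ≤ a ∨ y = a + 1 ∨ y = a + 2 ∨
      y = a + 3 ∨ y = a + 6 ∨ (2 * a + 11 ≤ y ∧ y ≤ 3 * a + 16) := by
    intro y hy
    rcases mem_union.mp hy with hy | hy
    · exact Or.inl ⟨hy, mem_Icc.mp (hL hy)⟩
    · exact Or.inr (mem_block.mp hy)
  rcases mem_union_block p hp with ⟨hpL, hp⟩ | hp <;>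
    rcases mem_union_block q hq with ⟨hqL, hq⟩ | hq
  · have hpq := hLL ▸ add_mem_add hpL hqL
    rw [mem_sdiff, mem_Icc] at hpq
    exact ⟨⟨hpq.1.1, by omega⟩, by omega, hpq.2⟩
  all_goals exact ⟨⟨by omega, by omega⟩, by omega, not_mem_E _ (by omega)⟩

theorem Icc_sdiff_subset_add_self_union_block (ha : -1 ≤ a) (hL : L ⊆ Icc 0 a)
    (hE : E ⊆ Icc 1 a) (hLL : L + L = Icc 0 (2 * a) \ E) :
    Icc 0 (2 * (3 * a + 16)) \ insert (2 * (a + 5)) E ⊆ (L ∪ block a) + (L ∪ block a) := by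
  intro x hx
  simp only [mem_sdiff, mem_insert, mem_Icc, not_or] at hx
  obtain ⟨⟨hx0, hx⟩, hx10, hxE⟩ := hx
  by_cases hxa : x ≤ 2 * a
  · have hxLL : x ∈ L + L := by
      rw [hLL, mem_sdiff, mem_Icc]
      exact ⟨⟨hx0, hxa⟩, hxE⟩
    exact add_subset_add subset_union_left subset_union_left hxLL
  have mem : ∀ y, y = a + 1 ∨ y = a + 2 ∨ y = a + 3 ∨ y = a + 6 ∨
      (2 * a + 11 ≤ y ∧ y ≤ 3 * a + 16) → y ∈ L ∪ block a :=
    fun y hy => mem_union_right _ (mem_block.mpr hy)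
  have hzero : (0 : ℤ) ∈ L ∪ block a := by
    obtain rfl | ha := ha.eq_or_lt
    · exact mem 0 (by omega)
    · exact mem_union_left _ (zero_mem_and_mem_of_add_self_eq (by omega) hL hE hLL).1
  rw [mem_add]
  -- `x` is `p + (x - p)` with `x - p` in `{a+1, a+2, a+3}` or in `[2a+11, 3a+16]`.
  obtain h | h | h | h | h | h | h | h | h : x = 2 * a + 1 ∨ (2 * a + 2 ≤ x ∧ x ≤ 2 * a + 4) ∨
      (2 * a + 5 ≤ x ∧ x ≤ 2 * a + 6) ∨ (2 * a + 7 ≤ x ∧ x ≤ 2 * a + 9) ∨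
      (2 * a + 11 ≤ x ∧ x ≤ 3 * a + 16) ∨ (3 * a + 17 ≤ x ∧ x ≤ 4 * a + 17) ∨
      (4 * a + 18 ≤ x ∧ x ≤ 4 * a + 22) ∨ (4 * a + 23 ≤ x ∧ x ≤ 5 * a + 27) ∨
      5 * a + 28 ≤ x := by omega
  · have haL := (zero_mem_and_mem_of_add_self_eq (by omega) hL hE hLL).2
    exact ⟨a, mem_union_left _ haL, a + 1, mem _ (by omega), by omega⟩
  · exact ⟨a + 1, mem _ (by omega), x - (a + 1), mem _ (by omega), by ring⟩
  · exact ⟨a + 3, mem _ (by omega), x - (a + 3), mem _ (by omega), by ring⟩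
  · exact ⟨a + 6, mem _ (by omega), x - (a + 6), mem _ (by omega), by ring⟩
  · exact ⟨0, hzero, x, mem _ (by omega), by ring⟩
  · exact ⟨a + 1, mem _ (by omega), x - (a + 1), mem _ (by omega), by ring⟩
  · exact ⟨a + 6, mem _ (by omega), x - (a + 6), mem _ (by omega), by ring⟩
  · exact ⟨2 * a + 11, mem _ (by omega), x - (2 * a + 11), mem _ (by omega), by ring⟩
  · exact ⟨3 * a + 16, mem _ (by omega), x - (3 * a + 16), mem _ (by omega), by ring⟩

theorem add_self_union_block (ha : -1 ≤ a) (hL : L ⊆ Icc 0 a) (hE : E ⊆ Icc 1 a)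
    (hLL : L + L = Icc 0 (2 * a) \ E) :
    (L ∪ block a) + (L ∪ block a) = Icc 0 (2 * (3 * a + 16)) \ insert (2 * (a + 5)) E :=
  (add_self_union_block_subset ha hL hE hLL).antisymm
    (Icc_sdiff_subset_add_self_union_block ha hL hE hLL)

end Block

section Sequence

variable {m : ℕ → ℤ} {L : ℕ → Finset ℤ}

theorem eq_closed_form (hm0 : m 0 = -1) (hm : ∀ i, m (i + 1) = 3 * m i + 16) (j : ℕ) :
    m j = 7 * 3 ^ j - 8 := by
  induction j with
  | zero => simpa using hm0
  | succ j ih => rw [hm, ih]; ring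

theorem neg_one_le (hm0 : m 0 = -1) (hm : ∀ i, m (i + 1) = 3 * m i + 16) (j : ℕ) :
    -1 ≤ m j := by
  rw [eq_closed_form hm0 hm]
  linarith [one_le_pow₀ (M₀ := ℤ) (n := j) (by norm_num : (1 : ℤ) ≤ 3)]

theorem image_range_subset_Icc (hm0 : m 0 = -1) (hm : ∀ i, m (i + 1) = 3 * m i + 16)
    (j : ℕ) : (range j).image (fun t => 2 * (m t + 5)) ⊆ Icc 1 (m j) := by
  induction j with
  | zero => simp
  | succ j ih =>
    have := neg_one_le hm0 hm j
    rw [range_add_one, image_insert, hm]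
    refine insert_subset (mem_Icc.mpr (by omega)) (ih.trans (Icc_subset_Icc le_rfl (by omega)))

theorem subset_Icc (hm0 : m 0 = -1) (hm : ∀ i, m (i + 1) = 3 * m i + 16) (hL0 : L 0 = ∅)
    (hL : ∀ i, L (i + 1) = L i ∪ block (m i)) (j : ℕ) : L j ⊆ Icc 0 (m j) := by
  induction j with
  | zero => simp [hL0]
  | succ j ih => rw [hL, hm]; exact union_block_subset_Icc (neg_one_le hm0 hm j) ih

theorem card_mul_two (hm0 : m 0 = -1) (hm : ∀ i, m (i + 1) = 3 * m i + 16) (hL0 : L 0 = ∅)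
    (hL : ∀ i, L (i + 1) = L i ∪ block (m i)) (j : ℕ) :
    ((L j).card : ℤ) * 2 = 7 * (3 ^ j - 1) + 4 * j := by
  induction j with
  | zero => simp [hL0]
  | succ j ih =>
    have := neg_one_le hm0 hm j
    rw [hL, card_union_block (by omega) (subset_Icc hm0 hm hL0 hL j), add_mul, ih,
      eq_closed_form hm0 hm]
    push_cast
    ring

theorem add_self_eq (hm0 : m 0 = -1) (hm : ∀ i, m (i + 1) = 3 * m i + 16) (hL0 : L 0 = ∅)
    (hL : ∀ i, L (i + 1) = L i ∪ block (m i)) (j : ℕ) :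
    L j + L j = Icc 0 (2 * m j) \ (range j).image (fun t => 2 * (m t + 5)) := by
  induction j with
  | zero => simp [hL0, hm0]
  | succ j ih =>
    rw [hL, hm, range_add_one, image_insert]
    exact add_self_union_block (neg_one_le hm0 hm j) (subset_Icc hm0 hm hL0 hL j)
      (image_range_subset_Icc hm0 hm j) ih

end Sequence

end InductiveSets

/-- The inductive construction in the proof of Theorem 8 (Case II):
with `m₀ = −1`, `L₀ = ∅`, `m_{i+1} = 3m_i + 16` and
`L_{i+1} = L_i ∪ ((m_i+1) + ({0,1,2,5} ∪ [m_i+10, 2m_i+15]))`, one has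
`m_j = 7·3^j − 8`, `|L_j| = 7(3^j−1)/2 + 2j`, and
`L_j + L_j = [0,2m_j] \ {2(m_t+5) : 0 ≤ t < j}` for every `j ≥ 0`. -/
theorem thm8_inductive_sets (m : ℕ → ℤ) (L : ℕ → Finset ℤ)
    (hm0 : m 0 = -1) (hL0 : L 0 = ∅)
    (hm : ∀ i, m (i + 1) = 3 * m i + 16)
    (hL : ∀ i, L (i + 1) = L i ∪
      ((({0, 1, 2, 5} : Finset ℤ) ∪ Finset.Icc (m i + 10) (2 * m i + 15)).image
        (fun x => (m i + 1) + x))) :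
    ∀ j : ℕ, m j = 7 * 3 ^ j - 8 ∧
      ((L j).card : ℤ) * 2 = 7 * (3 ^ j - 1) + 4 * j ∧
      L j + L j = Finset.Icc 0 (2 * m j) \
        ((Finset.range j).image (fun t : ℕ => 2 * (m t + 5))) := fun j =>
  ⟨InductiveSets.eq_closed_form hm0 hm j, InductiveSets.card_mul_two hm0 hm hL0 hL j,
    InductiveSets.add_self_eq hm0 hm hL0 hL j⟩
end

section
/- There exist infinitely many normalised MSTD subsets of ℤ of size 16; that is, the collection of finite sets A ⊆ ℤ with |A| = 16, min A = 0, gcd of the elements of A equal to 1, and |A+A| > |A−A| is infinite. -/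
/-!
Conway's set `A = {0,2,3,4,7,11,12,14}` has `|A+A| = 26 > 25 = |A-A|`. For `t > 28` the set
`B = A ∪ (t + A) = A + t·{0,1}` is a base-`t` expansion: its sums and differences never carry, so
`B + B = (A+A) + t·{0,1,2}` and `B - B = (A-A) + t·{-1,0,1}` have `3·26 = 78` and `3·25 = 75`
elements. Each such `B` is normalised, and `t ∈ B`, so no finite set contains all of them.
-/

open Finset Pointwise

-- Not `t • K`, which for `K : Finset ℤ` elaborates to the `t`-fold sumset `K + ⋯ + K`.
abbrev dilate (t : ℤ) (K : Finset ℤ) : Finset ℤ := K.image (t * ·)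

lemma dilate_add (t : ℤ) (K L : Finset ℤ) : dilate t (K + L) = dilate t K + dilate t L :=
  image_add (AddMonoidHom.mulLeft t)

lemma dilate_sub (t : ℤ) (K L : Finset ℤ) : dilate t (K - L) = dilate t K - dilate t L :=
  image_image₂_distrib fun k l => mul_sub t k l

lemma card_add_dilate {S : Finset ℤ} {a b t : ℤ} (hS : S ⊆ Icc a b) (ht : b - a < t)
    (K : Finset ℤ) : #(S + dilate t K) = #S * #K := by
  obtain rfl | ⟨s, hs⟩ := S.eq_empty_or_nonempty
  · simp
  have ht0 : t ≠ 0 := by have := mem_Icc.mp (hS hs); omega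
  rw [card_add_iff.mpr, card_image_of_injective _ (mul_right_injective₀ ht0)]
  rintro ⟨x, _⟩ ⟨hx, hu⟩ ⟨y, _⟩ ⟨hy, hv⟩ hxy
  obtain ⟨k, -, rfl⟩ := mem_image.mp hu
  obtain ⟨l, -, rfl⟩ := mem_image.mp hv
  have hx := hS hx
  have hy := hS hy
  simp only [mem_Icc] at hx hy hxy
  have hdvd : t ∣ x - y := ⟨l - k, by linarith⟩
  have hdiff : x - y = 0 :=
    Int.eq_zero_of_abs_lt_dvd hdvd (abs_sub_lt_iff.mpr ⟨by omega, by omega⟩)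
  have hkl : k = l := mul_left_cancel₀ ht0 (by omega)
  simp only [Prod.mk.injEq]
  omega

lemma add_self_subset_Icc {A : Finset ℤ} {n : ℤ} (hA : A ⊆ Icc 0 n) :
    A + A ⊆ Icc 0 (2 * n) := by
  have := Icc_add_Icc_subset (0 : ℤ) n 0 n
  rw [zero_add, ← two_mul] at this
  exact (add_subset_add hA hA).trans this

lemma sub_self_subset_Icc {A : Finset ℤ} {n : ℤ} (hA : A ⊆ Icc 0 n) :
    A - A ⊆ Icc (-n) n := by
  intro x hx
  obtain ⟨a, ha, b, hb, rfl⟩ := mem_sub.mp hx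
  have ha := mem_Icc.mp (hA ha)
  have hb := mem_Icc.mp (hA hb)
  exact mem_Icc.mpr ⟨by omega, by omega⟩

section Expansion

variable {A : Finset ℤ} {n t : ℤ} (hA : A ⊆ Icc 0 n) (ht : 2 * n < t) (K : Finset ℤ)
include hA ht

lemma card_add_dilate_add_self :
    #((A + dilate t K) + (A + dilate t K)) = #(A + A) * #(K + K) := by
  rw [add_add_add_comm, ← dilate_add, card_add_dilate (add_self_subset_Icc hA) (by omega)]

lemma card_add_dilate_sub_self :
    #((A + dilate t K) - (A + dilate t K)) = #(A - A) * #(K - K) := by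
  rw [add_sub_add_comm, ← dilate_sub, card_add_dilate (sub_self_subset_Icc hA) (by omega)]

end Expansion

lemma IsNormalised.add_dilate {A K : Finset ℤ} (hA : IsNormalised A) {t : ℤ} (ht : 0 ≤ t)
    (hK₀ : 0 ∈ K) (hK : ∀ k ∈ K, 0 ≤ k) : IsNormalised (A + dilate t K) := by
  obtain ⟨hA₀, hA, hgcd⟩ := hA
  have hsub : A ⊆ A + dilate t K := subset_add_left A (mem_image.mpr ⟨0, hK₀, mul_zero t⟩)
  refine ⟨hsub hA₀, ?_, ?_⟩
  · intro x hx
    obtain ⟨a, ha, _, hu, rfl⟩ := mem_add.mp hx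
    obtain ⟨k, hk, rfl⟩ := mem_image.mp hu
    have := hA a ha
    have := mul_nonneg ht (hK k hk)
    omega
  · have hdvd : (A + dilate t K).gcd id ∣ 1 := hgcd ▸ gcd_mono hsub
    rw [← Finset.normalize_gcd]
    exact normalize_eq_one.mpr (isUnit_of_dvd_one hdvd)

def conwaySet : Finset ℤ := {0, 2, 3, 4, 7, 11, 12, 14}

lemma conwaySet_subset_Icc : conwaySet ⊆ Icc 0 14 := by decide

lemma card_conwaySet : #conwaySet = 8 := by decide

lemma card_conwaySet_add_self : #(conwaySet + conwaySet) = 26 := by decide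

lemma card_conwaySet_sub_self : #(conwaySet - conwaySet) = 25 := by decide

lemma isNormalised_conwaySet : IsNormalised conwaySet := ⟨by decide, by decide, by decide⟩

lemma conwaySet_add_dilate_mstd {t : ℤ} (ht : 28 < t) :
    #(conwaySet + dilate t {0, 1}) = 16 ∧ IsNormalised (conwaySet + dilate t {0, 1}) ∧
      #((conwaySet + dilate t {0, 1}) - (conwaySet + dilate t {0, 1})) <
        #((conwaySet + dilate t {0, 1}) + (conwaySet + dilate t {0, 1})) := by
  have hA := conwaySet_subset_Icc
  have ht' : 2 * 14 < t := ht
  refine ⟨?_, isNormalised_conwaySet.add_dilate (by omega) (by decide) (by decide), ?_⟩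
  · rw [card_add_dilate hA (by omega), card_conwaySet]
    rfl
  · rw [card_add_dilate_add_self hA ht', card_add_dilate_sub_self hA ht', card_conwaySet_add_self,
      card_conwaySet_sub_self]
    decide

lemma mem_conwaySet_add_dilate (t : ℤ) : t ∈ conwaySet + dilate t {0, 1} :=
  mem_add.mpr ⟨0, by decide, t, mem_image.mpr ⟨1, by simp, mul_one t⟩, zero_add t⟩

/-- There are infinitely many normalised MSTD subsets of ℤ of size 16. -/
theorem infinitely_many_normalised_mstd_of_card_sixteen :
    Set.Infinite {A : Finset ℤ |
      A.card = 16 ∧ IsNormalised A ∧ (A - A).card < (A + A).card} := by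
  refine Set.infinite_of_not_bddAbove fun ⟨U, hU⟩ => ?_
  obtain ⟨M, hM⟩ := U.exists_le
  have ht : 28 < max 29 (M + 1) := by omega
  have := hM _ (hU (conwaySet_add_dilate_mstd ht) (mem_conwaySet_add_dilate _))
  omega
end

section
/- For every positive integer N there exists an MSTD set M ⊆ ℤ such that every symmetric subset S of M satisfies |S| ≤ |M| − N; that is, the difference between the size of an MSTD set and the maximal size of a symmetric subset of it can be made arbitrarily large. -/
open Finset Pointwise

/-!
Take the MSTD set `A = {0, 2, 3, 4, 7, 11, 12, 14}` (`|A + A| = 26`, `|A - A| = 25`) and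
`M = A + 30 • {0, …, N - 1}`. Since `A + A` and `A - A` fit in windows of length 30, elements of
`M ± M` have unique base-30 expansions, so `|M ± M| = |A ± A| (2N - 1)` and `M` is MSTD.
If `S ⊆ M` is symmetric about `x`, the low digits of an element of `S` and of its mirror image
add up to `x % 30` without carry, so `S ⊆ (A ∩ (x % 30 - A)) + 30 • {0, …, N - 1}`; each such
intersection has at most 7 elements, whence `|S| ≤ 7N = |M| - N`.
-/

section Symmetric

variable {α : Type*} [AddCommGroup α] [DecidableEq α]

def IsSymmetric (S : Finset α) : Prop := ∃ x, S = S.image (x - ·)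

theorem IsSymmetric.card_sub_self {Y : Finset α} (hY : IsSymmetric Y) :
    #(Y - Y) = #(Y + Y) := by
  obtain ⟨x, hx⟩ := hY
  calc #(Y - Y) = #(Y - ({x} - Y)) := by rw [singleton_sub, ← hx]
    _ = #(Y + Y + {-x}) := by rw [sub_sub_eq_add_sub, sub_eq_add_neg, neg_singleton]
    _ = #(Y + Y) := card_add_singleton _ _

theorem subset_inter_image_of_eq_image {S X : Finset α} {x : α} (hS : S = S.image (x - ·))
    (hSX : S ⊆ X) : S ⊆ X ∩ X.image (x - ·) :=
  subset_inter hSX (hS ▸ image_subset_image hSX)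

end Symmetric

theorem isSymmetric_Icc (a b : ℤ) : IsSymmetric (Icc a b) := by
  refine ⟨a + b, ext fun z => ?_⟩
  simp only [mem_image, mem_Icc]
  constructor
  · exact fun hz => ⟨a + b - z, by omega, by omega⟩
  · rintro ⟨w, hw, rfl⟩
    omega

def IsMSTD (A : Finset ℤ) : Prop := #(A - A) < #(A + A)

section Dilate

variable {X Y Z : Finset ℤ} {m : ℤ}

theorem image_mul_left_add : (Y + Z).image (m * ·) = Y.image (m * ·) + Z.image (m * ·) :=
  image_image₂_distrib fun a b => mul_add m a b

theorem image_mul_left_sub : (Y - Z).image (m * ·) = Y.image (m * ·) - Z.image (m * ·) :=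
  image_image₂_distrib fun a b => mul_sub m a b

theorem eq_of_add_mul_eq_add_mul {a a' y y' : ℤ} (ha : a - a' < m) (ha' : a' - a < m)
    (h : a + m * y = a' + m * y') : a = a' ∧ y = y' := by
  obtain hlt | rfl | hgt := lt_trichotomy y y'
  · nlinarith
  · exact ⟨by linarith, rfl⟩
  · nlinarith

theorem card_add_image_mul_left (hX : ∀ a ∈ X, ∀ b ∈ X, a - b < m) :
    #(X + Y.image (m * ·)) = #X * #Y := by
  change #(image₂ (· + ·) X _) = _
  rw [image₂_image_right, card_image₂_iff]
  rintro ⟨a, y⟩ ⟨ha, -⟩ ⟨a', y'⟩ ⟨ha', -⟩ h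
  obtain ⟨rfl, rfl⟩ := eq_of_add_mul_eq_add_mul (hX a ha a' ha') (hX a' ha' a ha) h
  rfl

theorem isMSTD_add_image_mul_left (hX : IsMSTD X) (hXX : ∀ a ∈ X + X, ∀ b ∈ X + X, a - b < m)
    (hXX' : ∀ a ∈ X - X, ∀ b ∈ X - X, a - b < m) (hY : IsSymmetric Y) (hY₀ : Y.Nonempty) :
    IsMSTD (X + Y.image (m * ·)) := by
  unfold IsMSTD at hX ⊢
  rw [add_add_add_comm, add_sub_add_comm, ← image_mul_left_add, ← image_mul_left_sub,
    card_add_image_mul_left hXX, card_add_image_mul_left hXX', hY.card_sub_self]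
  exact Nat.mul_lt_mul_of_pos_right hX (card_pos.2 (hY₀.add hY₀))

theorem inter_image_sub_subset_add_image_mul_left (hX : X + X ⊆ Ico 0 m) (x : ℤ) :
    (X + Y.image (m * ·)) ∩ (X + Y.image (m * ·)).image (x - ·) ⊆
      (X ∩ X.image (x % m - ·)) + Y.image (m * ·) := by
  intro s hs
  simp only [mem_inter, mem_image, mem_add] at hs
  obtain ⟨⟨a, ha, _, ⟨y, hy, rfl⟩, rfl⟩, _, ⟨a', ha', _, ⟨y', -, rfl⟩, rfl⟩, hmirror⟩ := hs
  have hx : x % m = a' + a := by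
    have hx : x = a' + a + m * (y' + y) := by linarith
    have hsum := mem_Ico.1 (hX (add_mem_add ha' ha))
    rw [hx, Int.add_mul_emod_self_left, Int.emod_eq_of_lt hsum.1 hsum.2]
  exact add_mem_add (mem_inter.2 ⟨ha, mem_image.2 ⟨a', ha', by rw [hx]; ring⟩⟩)
    (mem_image_of_mem _ hy)

theorem IsSymmetric.card_le_of_subset_add_image_mul_left (hX : X + X ⊆ Ico 0 m) {k : ℕ}
    (hk : ∀ r, #(X ∩ X.image (r - ·)) ≤ k) {S : Finset ℤ} (hS : IsSymmetric S)
    (hSM : S ⊆ X + Y.image (m * ·)) : #S ≤ k * #Y := by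
  obtain ⟨x, hx⟩ := hS
  calc #S ≤ #((X ∩ X.image (x % m - ·)) + Y.image (m * ·)) :=
        card_le_card <| (subset_inter_image_of_eq_image hx hSM).trans
          (inter_image_sub_subset_add_image_mul_left hX x)
    _ ≤ #(X ∩ X.image (x % m - ·)) * #(Y.image (m * ·)) := card_add_le
    _ ≤ k * #Y := Nat.mul_le_mul (hk _) card_image_le

end Dilate

def mstdBase : Finset ℤ := {0, 2, 3, 4, 7, 11, 12, 14}

theorem isMSTD_mstdBase : IsMSTD mstdBase := by
  unfold IsMSTD; decide

theorem card_mstdBase : #mstdBase = 8 := rfl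

theorem mstdBase_sub_lt : ∀ a ∈ mstdBase, ∀ b ∈ mstdBase, a - b < 30 := by decide

theorem add_mstdBase_sub_lt :
    ∀ a ∈ mstdBase + mstdBase, ∀ b ∈ mstdBase + mstdBase, a - b < 30 := by decide

theorem sub_mstdBase_sub_lt :
    ∀ a ∈ mstdBase - mstdBase, ∀ b ∈ mstdBase - mstdBase, a - b < 30 := by decide

theorem add_mstdBase_subset : mstdBase + mstdBase ⊆ Ico 0 30 := by decide

theorem card_inter_image_sub_mstdBase_le (r : ℤ) : #(mstdBase ∩ mstdBase.image (r - ·)) ≤ 7 := by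
  obtain h | ⟨s, hs⟩ := (mstdBase ∩ mstdBase.image (r - ·)).eq_empty_or_nonempty
  · simp [h]
  obtain ⟨hs, a, ha, rfl⟩ : s ∈ mstdBase ∧ ∃ a ∈ mstdBase, r - a = s := by simpa using hs
  have hr : r ∈ mstdBase + mstdBase := by simpa using add_mem_add hs ha
  exact (by decide : ∀ r ∈ mstdBase + mstdBase, #(mstdBase ∩ mstdBase.image (r - ·)) ≤ 7) r hr

/-- The gap between the size of an MSTD set and the maximal size of a
symmetric subset of it can be made arbitrarily large: for every `N > 0`
there is an MSTD set `M ⊆ ℤ` all of whose symmetric subsets `S` satisfy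
`|S| ≤ |M| − N`. -/
theorem symmetric_subset_gap_unbounded (N : ℕ) (hN : 0 < N) :
    ∃ M : Finset ℤ, (M - M).card < (M + M).card ∧
      ∀ S : Finset ℤ, S ⊆ M →
        (∃ x : ℤ, S = S.image (fun s => x - s)) → S.card + N ≤ M.card := by
  set Y : Finset ℤ := Icc 0 ((N : ℤ) - 1)
  have hY : #Y = N := by simp [Y]
  refine ⟨mstdBase + Y.image (30 * ·), isMSTD_add_image_mul_left isMSTD_mstdBase
    add_mstdBase_sub_lt sub_mstdBase_sub_lt (isSymmetric_Icc _ _)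
    (nonempty_Icc.2 (by omega)), fun S hSM hS => ?_⟩
  have hSN : #S ≤ 7 * N := hY ▸ IsSymmetric.card_le_of_subset_add_image_mul_left
    add_mstdBase_subset card_inter_image_sub_mstdBase_le hS hSM
  rw [card_add_image_mul_left mstdBase_sub_lt, card_mstdBase, hY]
  omega
end
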